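/- arXiv:0804.0987 — 4 statements merged into one kernel-verified Lean document; each statement's English description precedes it below -/
import Mathlib

section
/- Let (η1, η2, η3) be distributed according to the π_ab-posterior. Then η1 and η2 are independent, η1² has the Gamma distribution with shape (n−a)/2 and rate s11/2, and η2² has the Gamma distribution with shape (n−b)/2 and rate s22(1−r²)/2. -/
open MeasureTheory ProbabilityTheory Real
open scoped ENNReal

noncomputable section

/-- Chi-squared distribution with `ν` degrees of freedom: Gamma(ν/2, rate 1/2). -/
def chiSq (ν : ℝ) : Measure ℝ := gammaMeasure (ν / 2) (1 / 2)

/-- Unnormalized density of the π_ab-posterior of (η₁, η₂, η₃) on (0,∞) × (0,∞) × ℝ. -/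
def piabDensity (n : ℕ) (a b s11 s22 r : ℝ) (x : ℝ × ℝ × ℝ) : ℝ :=
  if 0 < x.1 ∧ 0 < x.2.1 then
    x.1 ^ ((n : ℝ) - 1 - a) * x.2.1 ^ ((n : ℝ) - 1 - b) *
      Real.exp (-(s11 * x.1 ^ 2 + s11 * (x.2.2 + x.2.1 * r * Real.sqrt (s22 / s11)) ^ 2
          + s22 * (1 - r ^ 2) * x.2.1 ^ 2) / 2)
  else 0

/-- `η` has the π_ab-posterior distribution: its law has density proportional to
`piabDensity` with respect to Lebesgue measure. -/
def HasPiabLaw {Ω : Type*} [MeasurableSpace Ω] (P : Measure Ω)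
    (n : ℕ) (a b s11 s22 r : ℝ) (η : Ω → ℝ × ℝ × ℝ) : Prop :=
  ∃ c : ℝ, 0 < c ∧ Measure.map η P =
    volume.withDensity fun x => ENNReal.ofReal (c * piabDensity n a b s11 s22 r x)

section AuxStmt4

lemma aux_sq_preimage (s : Set ℝ) :
    Set.Ioi (0:ℝ) ∩ (fun x : ℝ => x ^ 2) ⁻¹' s = Real.sqrt '' (s ∩ Set.Ioi 0) := by
  ext x
  simp only [Set.mem_inter_iff, Set.mem_preimage, Set.mem_Ioi, Set.mem_image]
  constructor
  · rintro ⟨hx, hxs⟩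
    exact ⟨x ^ 2, ⟨hxs, by positivity⟩, Real.sqrt_sq hx.le⟩
  · rintro ⟨y, ⟨hys, hy0⟩, rfl⟩
    exact ⟨Real.sqrt_pos.mpr hy0, by rwa [Real.sq_sqrt hy0.le]⟩

lemma aux_sqMap (p k : ℝ) :
    Measure.map (fun x : ℝ => x ^ 2)
      (volume.withDensity fun x =>
        ENNReal.ofReal (if 0 < x then x ^ p * Real.exp (-(k * x ^ 2) / 2) else 0))
    = volume.withDensity fun y =>
        ENNReal.ofReal (if 0 < y then (1 / 2) * y ^ ((p - 1) / 2) * Real.exp (-(k / 2 * y)) else 0) := by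
  have hmsq : Measurable fun x : ℝ => x ^ 2 := measurable_id.pow_const 2
  ext s hs
  rw [Measure.map_apply hmsq hs, withDensity_apply _ (hmsq hs), withDensity_apply _ hs]
  have key : ∀ (A : Set ℝ), MeasurableSet A → ∀ (h : ℝ → ℝ),
      (∫⁻ x in A, ENNReal.ofReal (if 0 < x then h x else 0))
        = ∫⁻ x in Set.Ioi 0 ∩ A, ENNReal.ofReal (h x) := by
    intro A hA h
    rw [← Measure.restrict_restrict measurableSet_Ioi,
        ← lintegral_indicator measurableSet_Ioi]
    congr 1
    funext x
    by_cases hx : (0:ℝ) < x <;> simp [Set.indicator, hx]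
  rw [key _ (hmsq hs) _, key _ hs _, aux_sq_preimage s]
  have hderiv : ∀ y ∈ s ∩ Set.Ioi (0:ℝ),
      HasFDerivWithinAt Real.sqrt
        (ContinuousLinearMap.smulRight (1 : ℝ →L[ℝ] ℝ) (1 / (2 * Real.sqrt y)))
        (s ∩ Set.Ioi 0) y :=
    fun y hy =>
      ((Real.hasDerivAt_sqrt (ne_of_gt hy.2)).hasDerivWithinAt).hasFDerivWithinAt
  have hinj : Set.InjOn Real.sqrt (s ∩ Set.Ioi 0) := by
    intro x hx y hy hxy
    have h2 := congrArg (fun t => t ^ 2) hxy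
    simpa [Real.sq_sqrt (le_of_lt hx.2), Real.sq_sqrt (le_of_lt hy.2)] using h2
  rw [lintegral_image_eq_lintegral_abs_det_fderiv_mul volume
      (hs.inter measurableSet_Ioi) hderiv hinj, Set.inter_comm (Set.Ioi (0:ℝ)) s]
  apply setLIntegral_congr_fun_ae (hs.inter measurableSet_Ioi)
  apply ae_of_all
  intro y hy
  have hy0 : (0:ℝ) < y := hy.2
  have hsy : 0 < Real.sqrt y := Real.sqrt_pos.mpr hy0
  rw [ContinuousLinearMap.smulRight_one_eq_toSpanSingleton, ContinuousLinearMap.det_toSpanSingleton, abs_of_pos (by positivity)]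
  rw [← ENNReal.ofReal_mul (by positivity)]
  congr 1
  have e1 : Real.sqrt y ^ 2 = y := Real.sq_sqrt hy0.le
  have e2 : Real.sqrt y ^ p = y ^ (p / 2) := by
    rw [Real.sqrt_eq_rpow, ← Real.rpow_mul hy0.le, show (1:ℝ)/2 * p = p / 2 by ring]
  have e3 : (1 : ℝ) / (2 * Real.sqrt y) = (1/2) * y ^ (-(1/2) : ℝ) := by
    rw [Real.sqrt_eq_rpow, Real.rpow_neg hy0.le]
    ring
  rw [e1, e2, e3, show -(k * y)/2 = -(k/2 * y) by ring,
    show ((p-1)/2 : ℝ) = -(1/2) + p/2 by ring, Real.rpow_add hy0]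
  ring

lemma aux_wd_gamma (p k : ℝ) (hp : -1 < p) (hk : 0 < k) :
    ∃ C : ℝ≥0∞,
    (volume.withDensity fun y =>
        ENNReal.ofReal (if 0 < y then (1/2) * y ^ ((p - 1)/2) * Real.exp (-(k/2 * y)) else 0))
      = C • gammaMeasure ((p+1)/2) (k/2) := by
  have hsh : 0 < (p+1)/2 := by linarith
  have hrt : 0 < k/2 := by linarith
  have hG : 0 < Real.Gamma ((p+1)/2) := Real.Gamma_pos_of_pos hsh
  have hR : 0 < (k/2) ^ ((p+1)/2) := Real.rpow_pos_of_pos hrt _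
  refine ⟨ENNReal.ofReal ((1/2) * Real.Gamma ((p+1)/2) / (k/2) ^ ((p+1)/2)), ?_⟩
  have hm : Measurable (gammaPDF ((p+1)/2) (k/2)) :=
    (measurable_gammaPDFReal _ _).ennreal_ofReal
  rw [gammaMeasure, ← withDensity_smul _ hm]
  apply withDensity_congr_ae
  have h0 : ∀ᵐ y : ℝ ∂volume, y ≠ (0:ℝ) := by
    refine (ae_iff ..).mpr ?_
    simpa using measure_singleton (0:ℝ)
  filter_upwards [h0] with y hy
  simp only [Pi.smul_apply, smul_eq_mul, gammaPDF_eq]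
  by_cases hpos : 0 < y
  · rw [if_pos hpos, if_pos hpos.le, ← ENNReal.ofReal_mul (by positivity)]
    congr 1
    rw [show ((p+1)/2 - 1 : ℝ) = (p-1)/2 by ring]
    field_simp
  · rw [if_neg hpos, if_neg (by intro h; rcases eq_or_lt_of_le h with h1 | h1; exact hy h1.symm; exact hpos h1)]
    simp

lemma aux_final {μ : Measure ℝ} [IsProbabilityMeasure μ] {sh rt : ℝ}
    (hsh : 0 < sh) (hrt : 0 < rt) {K : ℝ≥0∞} (h : μ = K • gammaMeasure sh rt) :
    μ = gammaMeasure sh rt := by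
  have hg : IsProbabilityMeasure (gammaMeasure sh rt) := isProbabilityMeasure_gammaMeasure hsh hrt
  have h1 : μ Set.univ = 1 := measure_univ
  rw [h, Measure.smul_apply, measure_univ, smul_eq_mul, mul_one] at h1
  rw [h, h1, one_smul]

lemma aux_prodWD {α β : Type*} [MeasurableSpace α] [MeasurableSpace β]
    (μ : Measure α) (ν : Measure β) [SigmaFinite μ] [SigmaFinite ν]
    {f : α → ℝ≥0∞} {g : β → ℝ≥0∞} (hf : Measurable f) (hg : Measurable g)
    [SigmaFinite (μ.withDensity f)] [SigmaFinite (ν.withDensity g)] :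
    (μ.withDensity f).prod (ν.withDensity g)
      = (μ.prod ν).withDensity (fun x => f x.1 * g x.2) :=
  Measure.prod_eq fun s t hs ht => by
    rw [withDensity_apply _ (hs.prod ht), ← Measure.prod_restrict,
      lintegral_prod_mul hf.aemeasurable hg.aemeasurable,
      withDensity_apply _ hs, withDensity_apply _ ht]

end AuxStmt4

/-- Lemma 1(b): under the π_ab-posterior, η₁ and η₂ are independent, with
`η₁² ~ Gamma((n-a)/2, rate s11/2)` and `η₂² ~ Gamma((n-b)/2, rate s22(1-r²)/2)`. -/
theorem stmt4 {Ω : Type*} [MeasurableSpace Ω] (P : Measure Ω) [IsProbabilityMeasure P]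
    (n : ℕ) (hn : 3 ≤ n) (a b : ℝ) (ha : 0 < (n : ℝ) - a) (hb : 0 < (n : ℝ) - b)
    (s11 s22 r : ℝ) (hs11 : 0 < s11) (hs22 : 0 < s22) (hr : r ∈ Set.Ioo (-1 : ℝ) 1)
    (η : Ω → ℝ × ℝ × ℝ) (hηm : Measurable η)
    (hη : HasPiabLaw P n a b s11 s22 r η) :
    IndepFun (fun ω => (η ω).1) (fun ω => (η ω).2.1) P ∧
    Measure.map (fun ω => ((η ω).1) ^ 2) P = gammaMeasure (((n : ℝ) - a) / 2) (s11 / 2) ∧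
    Measure.map (fun ω => ((η ω).2.1) ^ 2) P
      = gammaMeasure (((n : ℝ) - b) / 2) (s22 * (1 - r ^ 2) / 2) := by
  classical
  obtain ⟨c, hc, hmap0⟩ := hη
  have hr2 : 0 < 1 - r ^ 2 := by
    obtain ⟨h1, h2⟩ := hr
    nlinarith
  have hk2 : 0 < s22 * (1 - r ^ 2) := mul_pos hs22 hr2
  -- densities
  set Fc : ℝ → ℝ≥0∞ := fun x =>
    ENNReal.ofReal (c * (if 0 < x then x ^ ((n:ℝ)-1-a) * Real.exp (-(s11 * x ^ 2) / 2) else 0))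
    with hFc_def
  set F0 : ℝ → ℝ≥0∞ := fun x =>
    ENNReal.ofReal (if 0 < x then x ^ ((n:ℝ)-1-a) * Real.exp (-(s11 * x ^ 2) / 2) else 0)
    with hF0_def
  set G0 : ℝ × ℝ → ℝ≥0∞ := fun y =>
    ENNReal.ofReal (if 0 < y.1 then y.1 ^ ((n:ℝ)-1-b) *
      Real.exp (-(s11 * (y.2 + y.1 * r * Real.sqrt (s22 / s11)) ^ 2
        + s22 * (1 - r ^ 2) * y.1 ^ 2) / 2) else 0) with hG0_def
  set F2 : ℝ → ℝ≥0∞ := fun y =>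
    ENNReal.ofReal (if 0 < y then y ^ ((n:ℝ)-1-b) *
      Real.exp (-(s22 * (1 - r ^ 2) * y ^ 2) / 2) else 0) with hF2_def
  have minner1 : Measurable fun x : ℝ =>
      x ^ ((n:ℝ)-1-a) * Real.exp (-(s11 * x ^ 2) / 2) :=
    (measurable_id.pow_const _).mul
      ((((measurable_id.pow_const 2).const_mul s11).neg.div_const 2).exp)
  have minner2 : Measurable fun x : ℝ =>
      x ^ ((n:ℝ)-1-b) * Real.exp (-(s22 * (1 - r ^ 2) * x ^ 2) / 2) :=
    (measurable_id.pow_const _).mul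
      ((((measurable_id.pow_const 2).const_mul (s22 * (1 - r ^ 2))).neg.div_const 2).exp)
  have minner3 : Measurable fun y : ℝ × ℝ =>
      y.1 ^ ((n:ℝ)-1-b) * Real.exp (-(s11 * (y.2 + y.1 * r * Real.sqrt (s22 / s11)) ^ 2
        + s22 * (1 - r ^ 2) * y.1 ^ 2) / 2) :=
    (measurable_fst.pow_const _).mul
      (((((measurable_snd.add ((measurable_fst.mul_const r).mul_const
          (Real.sqrt (s22 / s11)))).pow_const 2).const_mul s11).add
        ((measurable_fst.pow_const 2).const_mul (s22 * (1 - r ^ 2)))).neg.div_const 2).exp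
  have hF0m : Measurable F0 := by
    rw [hF0_def]
    exact (Measurable.ite measurableSet_Ioi minner1 measurable_const).ennreal_ofReal
  have hFcm : Measurable Fc := by
    rw [hFc_def]
    exact ((Measurable.ite measurableSet_Ioi minner1 measurable_const).const_mul c).ennreal_ofReal
  have hG0m : Measurable G0 := by
    rw [hG0_def]
    exact (Measurable.ite (measurable_fst measurableSet_Ioi) minner3
      measurable_const).ennreal_ofReal
  have hF2m : Measurable F2 := by
    rw [hF2_def]
    exact (Measurable.ite measurableSet_Ioi minner2 measurable_const).ennreal_ofReal
  -- factorization of the joint density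
  have hfact : ∀ x : ℝ × ℝ × ℝ,
      ENNReal.ofReal (c * piabDensity n a b s11 s22 r x) = Fc x.1 * G0 x.2 := by
    intro x
    rw [hFc_def, hG0_def]
    simp only [piabDensity]
    by_cases h1 : 0 < x.1
    · by_cases h2 : 0 < x.2.1
      · rw [if_pos ⟨h1, h2⟩, if_pos h1, if_pos h2,
          ← ENNReal.ofReal_mul (by positivity)]
        congr 1
        rw [show c * (x.1 ^ ((n:ℝ)-1-a) * Real.exp (-(s11 * x.1 ^ 2) / 2)) *
            (x.2.1 ^ ((n:ℝ)-1-b) * Real.exp (-(s11 * (x.2.2 + x.2.1 * r * Real.sqrt (s22/s11)) ^ 2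
              + s22 * (1 - r ^ 2) * x.2.1 ^ 2) / 2))
          = c * (x.1 ^ ((n:ℝ)-1-a) * x.2.1 ^ ((n:ℝ)-1-b) *
            (Real.exp (-(s11 * x.1 ^ 2) / 2) * Real.exp (-(s11 * (x.2.2 + x.2.1 * r * Real.sqrt (s22/s11)) ^ 2
              + s22 * (1 - r ^ 2) * x.2.1 ^ 2) / 2))) from by ring, ← Real.exp_add]
        rw [show -(s11 * x.1 ^ 2) / 2 + -(s11 * (x.2.2 + x.2.1 * r * Real.sqrt (s22/s11)) ^ 2
              + s22 * (1 - r ^ 2) * x.2.1 ^ 2) / 2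
          = -(s11 * x.1 ^ 2 + s11 * (x.2.2 + x.2.1 * r * Real.sqrt (s22/s11)) ^ 2
              + s22 * (1 - r ^ 2) * x.2.1 ^ 2) / 2 from by ring]
      · rw [if_neg (by tauto), if_neg h2]
        simp
    · rw [if_neg (by tauto), if_neg h1]
      simp
  -- the joint law as a product measure
  set μ1 : Measure ℝ := volume.withDensity Fc with hμ1_def
  set μ2 : Measure (ℝ × ℝ) := volume.withDensity G0 with hμ2_def
  have hmap : Measure.map η P = μ1.prod μ2 := by
    rw [hmap0]
    have h1 : (volume : Measure (ℝ × ℝ × ℝ)).withDensity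
        (fun x => ENNReal.ofReal (c * piabDensity n a b s11 s22 r x))
        = ((volume : Measure ℝ).prod (volume : Measure (ℝ × ℝ))).withDensity
          (fun x => Fc x.1 * G0 x.2) := by
      rw [← Measure.volume_eq_prod]
      congr 1
      funext x
      exact hfact x
    rw [h1, ← aux_prodWD _ _ hFcm hG0m]
  set M1 : ℝ≥0∞ := μ1 Set.univ with hM1_def
  set M2 : ℝ≥0∞ := μ2 Set.univ with hM2_def
  have hM : M1 * M2 = 1 := by
    have h1 : (Measure.map η P) Set.univ = 1 := by
      rw [Measure.map_apply hηm MeasurableSet.univ]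
      simp
    rw [hmap, ← Set.univ_prod_univ, Measure.prod_prod] at h1
    exact h1
  -- marginal laws
  have hη1m : Measurable (fun ω => (η ω).1) := measurable_fst.comp hηm
  have hη2m : Measurable (fun ω => (η ω).2.1) :=
    measurable_fst.comp (measurable_snd.comp hηm)
  have hmap1 : Measure.map (fun ω => (η ω).1) P = M2 • μ1 := by
    ext s hs
    rw [Measure.map_apply hη1m hs]
    have hpre : (fun ω => (η ω).1) ⁻¹' s = η ⁻¹' (s ×ˢ (Set.univ : Set (ℝ × ℝ))) := by
      ext ω; simp
    rw [hpre, ← Measure.map_apply hηm (hs.prod MeasurableSet.univ), hmap,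
      Measure.prod_prod, Measure.smul_apply, smul_eq_mul]
    rw [mul_comm]
  have hmap2 : Measure.map (fun ω => (η ω).2.1) P = M1 • (μ2.map Prod.fst) := by
    ext s hs
    rw [Measure.map_apply hη2m hs]
    have hpre : (fun ω => (η ω).2.1) ⁻¹' s
        = η ⁻¹' ((Set.univ : Set ℝ) ×ˢ (Prod.fst ⁻¹' s)) := by
      ext ω; simp
    rw [hpre, ← Measure.map_apply hηm (MeasurableSet.univ.prod (measurable_fst hs)), hmap,
      Measure.prod_prod, Measure.smul_apply, smul_eq_mul,
      Measure.map_apply measurable_fst hs]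
  -- independence
  have hindep : IndepFun (fun ω => (η ω).1) (fun ω => (η ω).2.1) P := by
    rw [ProbabilityTheory.indepFun_iff_measure_inter_preimage_eq_mul]
    intro s t hs ht
    have e1 : (fun ω => (η ω).1) ⁻¹' s ∩ (fun ω => (η ω).2.1) ⁻¹' t
        = η ⁻¹' (s ×ˢ (Prod.fst ⁻¹' t)) := by
      ext ω; simp
    have hAB : P ((fun ω => (η ω).1) ⁻¹' s ∩ (fun ω => (η ω).2.1) ⁻¹' t)
        = μ1 s * μ2 (Prod.fst ⁻¹' t) := by
      rw [e1, ← Measure.map_apply hηm (hs.prod (measurable_fst ht)), hmap,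
        Measure.prod_prod]
    have hA : P ((fun ω => (η ω).1) ⁻¹' s) = M2 * μ1 s := by
      rw [← Measure.map_apply hη1m hs, hmap1, Measure.smul_apply, smul_eq_mul]
    have hB : P ((fun ω => (η ω).2.1) ⁻¹' t) = M1 * μ2 (Prod.fst ⁻¹' t) := by
      rw [← Measure.map_apply hη2m ht, hmap2, Measure.smul_apply, smul_eq_mul,
        Measure.map_apply measurable_fst ht]
    rw [hAB, hA, hB, show M2 * μ1 s * (M1 * μ2 (Prod.fst ⁻¹' t))
      = (M1 * M2) * (μ1 s * μ2 (Prod.fst ⁻¹' t)) from by ring, hM, one_mul]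
  -- the Gaussian integral constant
  set I : ℝ≥0∞ := ∫⁻ z : ℝ, ENNReal.ofReal (Real.exp (-(s11 * z ^ 2) / 2)) with hI_def
  -- marginal of the second coordinate
  have hfst : μ2.map Prod.fst = I • volume.withDensity F2 := by
    ext s hs
    rw [Measure.map_apply measurable_fst hs, hμ2_def,
      withDensity_apply _ (measurable_fst hs)]
    have hpre : (Prod.fst ⁻¹' s : Set (ℝ × ℝ)) = s ×ˢ (Set.univ : Set ℝ) := by
      ext y; simp
    rw [hpre, Measure.volume_eq_prod, ← Measure.prod_restrict, Measure.restrict_univ,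
      lintegral_prod _ hG0m.aemeasurable]
    have hinner : ∀ y : ℝ, (∫⁻ z : ℝ, G0 (y, z)) = F2 y * I := by
      intro y
      by_cases hy : 0 < y
      · have hGz : ∀ z : ℝ, G0 (y, z)
            = F2 y * ENNReal.ofReal
              (Real.exp (-(s11 * (z + y * r * Real.sqrt (s22 / s11)) ^ 2) / 2)) := by
          intro z
          rw [hG0_def, hF2_def]
          simp only [if_pos hy]
          rw [← ENNReal.ofReal_mul (by positivity)]
          congr 1
          rw [show -(s11 * (z + y * r * Real.sqrt (s22 / s11)) ^ 2
                + s22 * (1 - r ^ 2) * y ^ 2) / 2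
              = -(s22 * (1 - r ^ 2) * y ^ 2) / 2
                + -(s11 * (z + y * r * Real.sqrt (s22 / s11)) ^ 2) / 2 from by ring,
            Real.exp_add]
          ring
        simp_rw [hGz]
        rw [lintegral_const_mul _
          (Measurable.ennreal_ofReal ((((measurable_id'.add_const _).pow_const 2).const_mul
            s11).neg.div_const 2).exp : Measurable fun z : ℝ => ENNReal.ofReal
              (Real.exp (-(s11 * (z + y * r * Real.sqrt (s22 / s11)) ^ 2) / 2)))]
        congr 1
        exact lintegral_add_right_eq_self
          (fun z : ℝ => ENNReal.ofReal (Real.exp (-(s11 * z ^ 2) / 2)))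
          (y * r * Real.sqrt (s22 / s11))
      · have : ∀ z : ℝ, G0 (y, z) = 0 := by
          intro z
          rw [hG0_def]
          simp [hy]
        simp_rw [this]
        rw [hF2_def]
        simp [hy]
    simp_rw [hinner]
    rw [lintegral_mul_const _ hF2m, Measure.smul_apply, smul_eq_mul,
      withDensity_apply _ hs, mul_comm]
  -- properties of I
  have hIexp : (fun z : ℝ => Real.exp (-(s11 * z ^ 2) / 2))
      = fun z : ℝ => Real.exp (-(s11 / 2) * z ^ 2) := by
    funext z
    rw [show -(s11 * z ^ 2) / 2 = -(s11 / 2) * z ^ 2 from by ring]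
  have hInt : Integrable (fun z : ℝ => Real.exp (-(s11 * z ^ 2) / 2)) volume := by
    rw [hIexp]
    exact integrable_exp_neg_mul_sq (by linarith)
  have hItop : I ≠ ∞ := by
    rw [hI_def]
    exact (Integrable.lintegral_lt_top hInt).ne
  have hI0 : I ≠ 0 := by
    rw [hI_def]
    have hpos : 0 < ∫⁻ z : ℝ, ENNReal.ofReal (Real.exp (-(s11 * z ^ 2) / 2)) := by
      rw [lintegral_pos_iff_support (Measurable.ennreal_ofReal
        ((((measurable_id'.pow_const 2).const_mul s11).neg.div_const 2).exp) :
          Measurable fun z : ℝ => ENNReal.ofReal (Real.exp (-(s11 * z ^ 2) / 2)))]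
      have : (Function.support fun z : ℝ =>
          ENNReal.ofReal (Real.exp (-(s11 * z ^ 2) / 2))) = Set.univ :=
        Set.eq_univ_of_forall fun z =>
          (ENNReal.ofReal_pos.mpr (Real.exp_pos _)).ne'
      rw [this]
      simp
    exact hpos.ne'
  -- finiteness of masses
  have hM1top : M1 ≠ ∞ := by
    intro h
    rw [h] at hM
    by_cases h2 : M2 = 0
    · rw [h2, mul_zero] at hM; exact zero_ne_one hM
    · rw [ENNReal.top_mul h2] at hM; exact (ENNReal.top_ne_one) hM
  have hM2top : M2 ≠ ∞ := by
    intro h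
    rw [h] at hM
    by_cases h2 : M1 = 0
    · rw [h2, zero_mul] at hM; exact zero_ne_one hM
    · rw [ENNReal.mul_top h2] at hM; exact (ENNReal.top_ne_one) hM
  -- first marginal squared
  have hsqm : Measurable fun x : ℝ => x ^ 2 := measurable_id.pow_const 2
  have hμ1split : μ1 = ENNReal.ofReal c • volume.withDensity F0 := by
    rw [hμ1_def, ← withDensity_smul _ hF0m]
    congr 1
    funext x
    rw [hFc_def, hF0_def]
    simp only [Pi.smul_apply, smul_eq_mul]
    rw [ENNReal.ofReal_mul hc.le]
  have hsq1 : Measure.map (fun ω => ((η ω).1) ^ 2) P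
      = gammaMeasure (((n : ℝ) - a) / 2) (s11 / 2) := by
    have hcomp : (fun ω => ((η ω).1) ^ 2)
        = (fun x : ℝ => x ^ 2) ∘ (fun ω => (η ω).1) := rfl
    obtain ⟨C, hC⟩ := aux_wd_gamma ((n:ℝ)-1-a) s11 (by linarith) hs11
    rw [show ((n:ℝ)-1-a+1)/2 = ((n:ℝ)-a)/2 from by ring] at hC
    have heq : Measure.map (fun ω => ((η ω).1) ^ 2) P
        = (M2 * ENNReal.ofReal c * C) • gammaMeasure (((n:ℝ)-a)/2) (s11/2) := by
      rw [hcomp, ← Measure.map_map hsqm hη1m, hmap1, Measure.map_smul, hμ1split,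
        Measure.map_smul, aux_sqMap ((n:ℝ)-1-a) s11, hC, smul_smul, smul_smul]
    have : IsProbabilityMeasure (Measure.map (fun ω => ((η ω).1) ^ 2) P) :=
      Measure.isProbabilityMeasure_map ((hsqm.comp hη1m).aemeasurable)
    exact aux_final (by positivity) (by positivity) heq
  -- second marginal squared
  have hsq2 : Measure.map (fun ω => ((η ω).2.1) ^ 2) P
      = gammaMeasure (((n : ℝ) - b) / 2) (s22 * (1 - r ^ 2) / 2) := by
    have hcomp : (fun ω => ((η ω).2.1) ^ 2)
        = (fun x : ℝ => x ^ 2) ∘ (fun ω => (η ω).2.1) := rfl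
    obtain ⟨C, hC⟩ := aux_wd_gamma ((n:ℝ)-1-b) (s22 * (1 - r ^ 2)) (by linarith) hk2
    rw [show ((n:ℝ)-1-b+1)/2 = ((n:ℝ)-b)/2 from by ring] at hC
    have heq : Measure.map (fun ω => ((η ω).2.1) ^ 2) P
        = (M1 * I * C) • gammaMeasure (((n:ℝ)-b)/2) (s22 * (1 - r ^ 2) / 2) := by
      rw [hcomp, ← Measure.map_map hsqm hη2m, hmap2, Measure.map_smul, hfst,
        Measure.map_smul, aux_sqMap ((n:ℝ)-1-b) (s22 * (1 - r ^ 2)), hC,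
        smul_smul, smul_smul]
    have : IsProbabilityMeasure (Measure.map (fun ω => ((η ω).2.1) ^ 2) P) :=
      Measure.isProbabilityMeasure_map ((hsqm.comp hη2m).aemeasurable)
    exact aux_final (by positivity) (by positivity) heq
  exact ⟨hindep, hsq1, hsq2⟩

end
end

section
/- Let (η1, η2, η3) be distributed according to the π_ab-posterior, and let Z*, X_a*, X_b* be independent random variables where Z* is standard normal, X_a* is chi-squared with n−a degrees of freedom and X_b* is chi-squared with n−b degrees of freedom. Then ρ := −η3/√(η1² + η3²) has the same distribution as ψ( −Z*/√(X_a*) + √(X_b*/X_a*) · r/√(1−r²) ), where ψ(y) = y/√(1+y²). -/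
open MeasureTheory ProbabilityTheory Real
open scoped ENNReal NNReal

noncomputable section

namespace Stmt5Aux

lemma map_withDensity_comp {α β : Type*} [MeasurableSpace α] [MeasurableSpace β]
    (ν : Measure α) {f : α → β} (hf : Measurable f) {g : β → ℝ≥0∞} (hg : Measurable g) :
    Measure.map f (ν.withDensity fun x => g (f x)) = (Measure.map f ν).withDensity g := by
  ext s hs
  rw [Measure.map_apply hf hs, withDensity_apply _ hs, withDensity_apply _ (hf hs),
    setLIntegral_map hs hg hf]


lemma prod_withDensity {α β : Type*} [MeasurableSpace α] [MeasurableSpace β]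
    {μ : Measure α} {ν : Measure β} [SigmaFinite μ] [SigmaFinite ν]
    {f : α → ℝ≥0∞} {g : β → ℝ≥0∞} (hf : Measurable f) (hg : Measurable g)
    [SigmaFinite (μ.withDensity f)] [SigmaFinite (ν.withDensity g)] :
    (μ.withDensity f).prod (ν.withDensity g)
      = (μ.prod ν).withDensity (fun z => f z.1 * g z.2) :=
  Measure.prod_eq fun s t hs ht => by
    rw [withDensity_apply _ (hs.prod ht), ← Measure.prod_restrict,
      lintegral_prod_mul hf.aemeasurable hg.aemeasurable,
      withDensity_apply _ hs, withDensity_apply _ ht]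

lemma smul_prod_smul {α β : Type*} [MeasurableSpace α] [MeasurableSpace β]
    (c d : ℝ≥0∞) (hc : c ≠ ∞) (hd : d ≠ ∞) (μ : Measure α) (ν : Measure β)
    [IsFiniteMeasure μ] [IsFiniteMeasure ν] :
    (c • μ).prod (d • ν) = (c * d) • (μ.prod ν) := by
  have h1 : IsFiniteMeasure (c • μ) :=
    ⟨by rw [Measure.smul_apply, smul_eq_mul]; exact ENNReal.mul_lt_top hc.lt_top (measure_lt_top μ _)⟩
  have h2 : IsFiniteMeasure (d • ν) :=
    ⟨by rw [Measure.smul_apply, smul_eq_mul]; exact ENNReal.mul_lt_top hd.lt_top (measure_lt_top ν _)⟩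
  refine Measure.prod_eq fun s t hs ht => ?_
  simp only [Measure.smul_apply, smul_eq_mul, Measure.prod_prod]
  ring

lemma map_mul_sq {t ν : ℝ} (ht : 0 < t) (hν : 0 < ν) :
    ∃ C : ℝ≥0∞, C ≠ 0 ∧ C ≠ ∞ ∧
      Measure.map (fun x : ℝ => t * x ^ 2)
        (volume.withDensity fun x => ENNReal.ofReal
          (if 0 < x then x ^ (ν - 1) * Real.exp (-(t * x ^ 2) / 2) else 0))
      = C • chiSq ν := by
  have hΓ : 0 < Real.Gamma (ν / 2) := Real.Gamma_pos_of_pos (by positivity)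
  set K : ℝ := Real.Gamma (ν / 2) * 2 ^ (ν / 2) / (2 * t ^ (ν / 2)) with hKdef
  have hK : 0 < K := by
    apply div_pos (mul_pos hΓ (Real.rpow_pos_of_pos two_pos _))
    have := Real.rpow_pos_of_pos ht (ν / 2); positivity
  set f : ℝ → ℝ := fun x => t * x ^ 2 with hfdef
  set g : ℝ → ℝ≥0∞ := fun y => ENNReal.ofReal K * gammaPDF (ν / 2) (1 / 2) y with hgdef
  have hfm : Measurable f := by fun_prop
  have hpdfm : Measurable (gammaPDF (ν / 2) (1 / 2)) := (measurable_gammaPDFReal _ _).ennreal_ofReal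
  have hgm : Measurable g := hpdfm.const_mul _
  set f' : ℝ → ℝ →L[ℝ] ℝ :=
    fun x => ContinuousLinearMap.smulRight (1 : ℝ →L[ℝ] ℝ) (2 * t * x) with hf'def
  have hdet : ∀ x : ℝ, (f' x).det = 2 * t * x := fun x =>
    ContinuousLinearMap.det_toSpanSingleton _
  have hderiv : ∀ x ∈ Set.Ioi (0 : ℝ), HasFDerivWithinAt f (f' x) (Set.Ioi 0) x := by
    intro x _
    have h : HasDerivAt f (2 * t * x) x := by
      have := (hasDerivAt_pow 2 x).const_mul t
      simpa [mul_comm, mul_assoc, mul_left_comm] using this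
    exact h.hasFDerivAt.hasFDerivWithinAt
  have hinj : Set.InjOn f (Set.Ioi 0) := by
    intro x hx y hy hxy
    simp only [hfdef] at hxy
    have hx0 : (0:ℝ) < x := hx
    have hy0 : (0:ℝ) < y := hy
    have h2 : x ^ 2 = y ^ 2 := mul_left_cancel₀ ht.ne' hxy
    nlinarith
  have himg : f '' Set.Ioi 0 = Set.Ioi 0 := by
    ext y
    simp only [Set.mem_image, Set.mem_Ioi, hfdef]
    constructor
    · rintro ⟨x, hx, rfl⟩; positivity
    · intro hy
      refine ⟨Real.sqrt (y / t), by positivity, ?_⟩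
      rw [Real.sq_sqrt (by positivity)]
      field_simp
  have hdens : (fun x : ℝ => ENNReal.ofReal
        (if 0 < x then x ^ (ν - 1) * Real.exp (-(t * x ^ 2) / 2) else 0))
      = (Set.Ioi (0:ℝ)).indicator (fun x => ENNReal.ofReal |(f' x).det| * g (f x)) := by
    funext x
    by_cases hx : 0 < x
    · rw [Set.indicator_of_mem (Set.mem_Ioi.2 hx), if_pos hx, hdet]
      have habs : |2 * t * x| = 2 * t * x := abs_of_pos (by positivity)
      rw [habs, hgdef, hfdef]
      simp only []
      rw [gammaPDF_of_nonneg (show (0:ℝ) ≤ t * x ^ 2 by positivity)]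
      rw [← ENNReal.ofReal_mul (by positivity), ← ENNReal.ofReal_mul (by positivity)]
      congr 1
      have htpow : (t * x ^ 2) ^ (ν / 2 - 1) = t ^ (ν / 2 - 1) * x ^ (ν - 2) := by
        rw [Real.mul_rpow ht.le (sq_nonneg x), ← Real.rpow_natCast x 2,
          ← Real.rpow_mul hx.le, show ((2:ℕ):ℝ) * (ν / 2 - 1) = ν - 2 by push_cast; ring]
      have hxpow : x ^ (ν - 1) = x ^ (ν - 2) * x := by
        rw [show ν - 1 = (ν - 2) + 1 by ring, Real.rpow_add hx, Real.rpow_one]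
      have htpow2 : t ^ (ν / 2 - 1) = t ^ (ν / 2) / t := by
        rw [show ν / 2 - 1 = ν / 2 + (-1) by ring, Real.rpow_add ht, Real.rpow_neg_one]
        ring
      have h12 : ((1:ℝ) / 2) ^ (ν / 2) = 1 / 2 ^ (ν / 2) := by
        rw [Real.div_rpow (by norm_num) (by norm_num), Real.one_rpow]
      have hexp : Real.exp (-(1 / 2 * (t * x ^ 2))) = Real.exp (-(t * x ^ 2) / 2) := by
        congr 1; ring
      rw [htpow, hxpow, htpow2, h12, hexp]
      have h2 : (0:ℝ) < 2 ^ (ν / 2) := Real.rpow_pos_of_pos two_pos _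
      have ht2 : (0:ℝ) < t ^ (ν / 2) := Real.rpow_pos_of_pos ht _
      field_simp
      ring_nf
      rw [hKdef, show ν * (1/2) = ν/2 by ring, div_mul_eq_mul_div, div_mul_eq_mul_div,
        eq_div_iff (by positivity)]
      ring
    · rw [Set.indicator_of_notMem (by simpa using hx), if_neg hx]; simp
  have hdens2 : (fun x => ENNReal.ofReal |(f' x).det| * g (f x))
      = (fun x => ENNReal.ofReal |(f' x).det|) * (fun x => g (f x)) := rfl
  have hdetm : Measurable fun x => ENNReal.ofReal |(f' x).det| := by
    simp only [hdet]; fun_prop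
  have h0 : ∀ᵐ (x : ℝ) ∂volume, x ≠ 0 := by
    refine ae_iff.2 ?_
    simp only [ne_eq, not_not]
    simpa using Real.volume_singleton (x := 0)
  refine ⟨ENNReal.ofReal K, by simp [ENNReal.ofReal_eq_zero, not_le, hK], ENNReal.ofReal_ne_top, ?_⟩
  calc Measure.map f (volume.withDensity fun x => ENNReal.ofReal
        (if 0 < x then x ^ (ν - 1) * Real.exp (-(t * x ^ 2) / 2) else 0))
      = Measure.map f ((volume.restrict (Set.Ioi 0)).withDensity
          fun x => ENNReal.ofReal |(f' x).det| * g (f x)) := by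
        rw [hdens, withDensity_indicator measurableSet_Ioi]
    _ = Measure.map f (((volume.restrict (Set.Ioi 0)).withDensity
          (fun x => ENNReal.ofReal |(f' x).det|)).withDensity fun x => g (f x)) := by
        have hgfm : Measurable fun x => g (f x) := hgm.comp hfm
        rw [hdens2, withDensity_mul _ hdetm hgfm]
    _ = (Measure.map f ((volume.restrict (Set.Ioi 0)).withDensity
          (fun x => ENNReal.ofReal |(f' x).det|))).withDensity g :=
        map_withDensity_comp _ hfm hgm
    _ = (volume.restrict (f '' Set.Ioi 0)).withDensity g := by
        rw [map_withDensity_abs_det_fderiv_eq_addHaar volume measurableSet_Ioi.nullMeasurableSet hderiv hinj]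
    _ = volume.withDensity ((Set.Ioi (0:ℝ)).indicator g) := by
        rw [himg, withDensity_indicator measurableSet_Ioi]
    _ = volume.withDensity g := by
        refine withDensity_congr_ae ?_
        filter_upwards [h0] with x hx
        rcases lt_or_gt_of_ne hx with hneg | hpos
        · rw [Set.indicator_of_notMem (by simpa using hneg.le.not_gt)]
          simp [hgdef, gammaPDF_of_neg hneg]
        · rw [Set.indicator_of_mem (Set.mem_Ioi.2 hpos)]
    _ = ENNReal.ofReal K • chiSq ν := by
        rw [hgdef]
        rw [show (fun y => ENNReal.ofReal K * gammaPDF (ν / 2) (1 / 2) y)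
          = ENNReal.ofReal K • gammaPDF (ν / 2) (1 / 2) from rfl]
        rw [withDensity_smul _ hpdfm]
        rfl

lemma map_sqrt_mul {s11 : ℝ} (hs : 0 < s11) :
    ∃ C : ℝ≥0∞, C ≠ 0 ∧ C ≠ ∞ ∧
      Measure.map (fun u : ℝ => Real.sqrt s11 * u)
        (volume.withDensity fun u => ENNReal.ofReal (Real.exp (-(s11 * u ^ 2) / 2)))
      = C • gaussianReal 0 1 := by
  have hπ : (0:ℝ) < π := Real.pi_pos
  set v : ℝ≥0 := ⟨1 / s11, by positivity⟩ with hvdef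
  have hv0 : v ≠ 0 := by
    rw [← NNReal.coe_ne_zero]
    show (1 / s11 : ℝ) ≠ 0
    positivity
  have hcoe : ((v : ℝ)) = 1 / s11 := rfl
  set K : ℝ := Real.sqrt (2 * π * (1 / s11)) with hKdef
  have hK : 0 < K := Real.sqrt_pos.2 (by positivity)
  have hdens : (fun u : ℝ => ENNReal.ofReal (Real.exp (-(s11 * u ^ 2) / 2)))
      = fun u => ENNReal.ofReal K * gaussianPDF 0 v u := by
    funext u
    rw [gaussianPDF, ← ENNReal.ofReal_mul hK.le]
    congr 1
    rw [gaussianPDFReal]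
    simp only [sub_zero, hcoe]
    have h1 : -u ^ 2 / (2 * (1 / s11)) = -(s11 * u ^ 2) / 2 := by field_simp
    rw [h1, ← mul_assoc, mul_inv_cancel₀ hK.ne', one_mul]
  have hmeq : Measure.map (fun u : ℝ => Real.sqrt s11 * u) (gaussianReal 0 v)
      = gaussianReal 0 1 := by
    rw [show (fun u : ℝ => Real.sqrt s11 * u) = (Real.sqrt s11 * ·) from rfl,
      gaussianReal_map_const_mul]
    norm_num
    congr 1
    ext
    push_cast
    rw [Real.sq_sqrt hs.le, hcoe]
    field_simp
  refine ⟨ENNReal.ofReal K, by simp [ENNReal.ofReal_eq_zero, not_le, hK],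
    ENNReal.ofReal_ne_top, ?_⟩
  rw [hdens, show (fun u => ENNReal.ofReal K * gaussianPDF 0 v u)
      = ENNReal.ofReal K • gaussianPDF 0 v from rfl,
    withDensity_smul _ (measurable_gaussianPDF _ _),
    ← gaussianReal_of_var_ne_zero 0 hv0, Measure.map_smul, hmeq]

end Stmt5Aux

open Stmt5Aux in
set_option maxHeartbeats 2000000 in
/-- Fact 1(b), eq. (18): under the π_ab-posterior, `ρ = -η₃/√(η₁² + η₃²)` has the same
distribution as `ψ(-Z*/√Xₐ* + √(X_b*/Xₐ*)·r/√(1-r²))` where `ψ(y) = y/√(1+y²)` and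
`Z*, Xₐ*, X_b*` are independent standard normal, χ²_{n-a} and χ²_{n-b}. -/
theorem stmt5 {Ω : Type*} [MeasurableSpace Ω] (P : Measure Ω) [IsProbabilityMeasure P]
    (n : ℕ) (hn : 3 ≤ n) (a b : ℝ) (ha : 0 < (n : ℝ) - a) (hb : 0 < (n : ℝ) - b)
    (s11 s22 r : ℝ) (hs11 : 0 < s11) (hs22 : 0 < s22) (hr : r ∈ Set.Ioo (-1 : ℝ) 1)
    (η : Ω → ℝ × ℝ × ℝ) (hηm : Measurable η)
    (hη : HasPiabLaw P n a b s11 s22 r η) :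
    Measure.map (fun ω => -(η ω).2.2 / Real.sqrt ((η ω).1 ^ 2 + (η ω).2.2 ^ 2)) P
      = Measure.map
          (fun p : ℝ × ℝ × ℝ =>
            let y := -p.1 / Real.sqrt p.2.1
              + Real.sqrt (p.2.2 / p.2.1) * (r / Real.sqrt (1 - r ^ 2))
            y / Real.sqrt (1 + y ^ 2))
          ((gaussianReal 0 1).prod ((chiSq ((n : ℝ) - a)).prod (chiSq ((n : ℝ) - b)))) := by
  obtain ⟨c, hc, hmap⟩ := hη
  have hr2 : r ^ 2 < 1 := by nlinarith [hr.1, hr.2]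
  set tb : ℝ := s22 * (1 - r ^ 2) with htbdef
  have htb : 0 < tb := by nlinarith
  set c0 : ℝ := r * Real.sqrt (s22 / s11) with hc0def
  -- density pieces
  set F1 : ℝ → ℝ≥0∞ := fun x => ENNReal.ofReal
    (if 0 < x then x ^ ((n : ℝ) - a - 1) * Real.exp (-(s11 * x ^ 2) / 2) else 0) with hF1def
  set F2 : ℝ → ℝ≥0∞ := fun x => ENNReal.ofReal
    (if 0 < x then x ^ ((n : ℝ) - b - 1) * Real.exp (-(tb * x ^ 2) / 2) else 0) with hF2def
  set F3 : ℝ → ℝ≥0∞ := fun u => ENNReal.ofReal (Real.exp (-(s11 * u ^ 2) / 2)) with hF3def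
  have hF1m : Measurable F1 := by
    apply Measurable.ennreal_ofReal
    apply Measurable.ite measurableSet_Ioi <;> fun_prop
  have hF2m : Measurable F2 := by
    apply Measurable.ennreal_ofReal
    apply Measurable.ite measurableSet_Ioi <;> fun_prop
  have hF3m : Measurable F3 := by apply Measurable.ennreal_ofReal; fun_prop
  have hsplit : ∀ x : ℝ × ℝ × ℝ, ENNReal.ofReal (c * piabDensity n a b s11 s22 r x)
      = (ENNReal.ofReal c * F1 x.1) * (F2 x.2.1 * F3 (x.2.2 + x.2.1 * c0)) := by
    intro x
    simp only [hF1def, hF2def, hF3def, piabDensity]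
    by_cases h1 : 0 < x.1
    · by_cases h2 : 0 < x.2.1
      · rw [if_pos ⟨h1, h2⟩, if_pos h1, if_pos h2,
          show (n : ℝ) - 1 - a = (n : ℝ) - a - 1 by ring,
          show (n : ℝ) - 1 - b = (n : ℝ) - b - 1 by ring]
        rw [← ENNReal.ofReal_mul (by positivity), ← ENNReal.ofReal_mul (by positivity),
          ← ENNReal.ofReal_mul (by positivity)]
        congr 1
        have hexp : Real.exp (-(s11 * x.1 ^ 2
              + s11 * (x.2.2 + x.2.1 * r * Real.sqrt (s22 / s11)) ^ 2
              + s22 * (1 - r ^ 2) * x.2.1 ^ 2) / 2)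
            = Real.exp (-(s11 * x.1 ^ 2) / 2) * Real.exp (-(tb * x.2.1 ^ 2) / 2)
              * Real.exp (-(s11 * (x.2.2 + x.2.1 * c0) ^ 2) / 2) := by
          rw [← Real.exp_add, ← Real.exp_add]
          congr 1
          rw [htbdef, hc0def]
          ring
        rw [hexp]
        ring
      · rw [if_neg (by tauto), if_neg h2]
        simp
    · rw [if_neg (by tauto), if_neg h1]
      simp
  -- measures and maps
  set μ : Measure (ℝ × ℝ × ℝ) := Measure.map η P with hμdef
  haveI hμprob : IsProbabilityMeasure μ := Measure.isProbabilityMeasure_map hηm.aemeasurable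
  set G1 : ℝ → ℝ≥0∞ := fun x => ENNReal.ofReal c * F1 x with hG1def
  set G23 : ℝ × ℝ → ℝ≥0∞ := fun p => F2 p.1 * F3 (p.2 + p.1 * c0) with hG23def
  have hG1m : Measurable G1 := hF1m.const_mul _
  have hG23m : Measurable G23 :=
    (hF2m.comp measurable_fst).mul
      (hF3m.comp (measurable_snd.add (measurable_fst.mul_const _)))
  have hF1top : ∀ x, F1 x ≠ ∞ := fun x => by rw [hF1def]; exact ENNReal.ofReal_ne_top
  have hF2top : ∀ x, F2 x ≠ ∞ := fun x => by rw [hF2def]; exact ENNReal.ofReal_ne_top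
  have hF3top : ∀ x, F3 x ≠ ∞ := fun x => by rw [hF3def]; exact ENNReal.ofReal_ne_top
  have hG1top : ∀ x, G1 x ≠ ∞ := fun x => by
    rw [hG1def]; exact ENNReal.mul_ne_top ENNReal.ofReal_ne_top (hF1top x)
  have hG23top : ∀ p, G23 p ≠ ∞ := fun p => by
    rw [hG23def]; exact ENNReal.mul_ne_top (hF2top _) (hF3top _)
  haveI instG1 : SigmaFinite (volume.withDensity G1) :=
    SigmaFinite.withDensity_of_ne_top' hG1top
  haveI instG23 : SigmaFinite ((volume : Measure (ℝ × ℝ)).withDensity G23) :=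
    SigmaFinite.withDensity_of_ne_top' hG23top
  haveI instF2 : SigmaFinite (volume.withDensity F2) :=
    SigmaFinite.withDensity_of_ne_top' hF2top
  haveI instF3 : SigmaFinite (volume.withDensity F3) :=
    SigmaFinite.withDensity_of_ne_top' hF3top
  haveI instChiA : IsProbabilityMeasure (chiSq ((n : ℝ) - a)) :=
    isProbabilityMeasure_gammaMeasure (by linarith) (by norm_num)
  haveI instChiB : IsProbabilityMeasure (chiSq ((n : ℝ) - b)) :=
    isProbabilityMeasure_gammaMeasure (by linarith) (by norm_num)
  have hμ : μ = (volume.withDensity G1).prod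
      ((volume : Measure (ℝ × ℝ)).withDensity G23) := by
    rw [hmap,
      show (fun x : ℝ × ℝ × ℝ => ENNReal.ofReal (c * piabDensity n a b s11 s22 r x))
        = fun z : ℝ × ℝ × ℝ => G1 z.1 * G23 z.2 from funext fun x => by
          rw [hsplit x, hG1def, hG23def],
      Measure.volume_eq_prod]
    exact (Stmt5Aux.prod_withDensity hG1m hG23m).symm
  set q1 : ℝ → ℝ := fun x => s11 * x ^ 2 with hq1def
  set qb : ℝ → ℝ := fun x => tb * x ^ 2 with hqbdef
  set qw : ℝ → ℝ := fun u => Real.sqrt s11 * u with hqwdef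
  set shear : ℝ × ℝ → ℝ × ℝ := fun p => (p.1, p.2 + p.1 * c0) with hsheardef
  set q2 : ℝ × ℝ → ℝ × ℝ := fun p => (qb p.1, qw (p.2 + p.1 * c0)) with hq2def
  have hq1m : Measurable q1 := by rw [hq1def]; fun_prop
  have hqbm : Measurable qb := by rw [hqbdef]; fun_prop
  have hqwm : Measurable qw := by rw [hqwdef]; fun_prop
  have hshearm : Measurable shear := by
    rw [hsheardef]
    exact measurable_fst.prodMk (measurable_snd.add (measurable_fst.mul_const _))
  have hq2m : Measurable q2 := by
    rw [hq2def]
    exact (hqbm.comp measurable_fst).prodMk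
      (hqwm.comp (measurable_snd.add (measurable_fst.mul_const _)))
  obtain ⟨C1, hC1ne, hC1top, hC1⟩ := map_mul_sq hs11 ha
  obtain ⟨Cb, hCbne, hCbtop, hCb⟩ := map_mul_sq htb hb
  obtain ⟨Cw, hCwne, hCwtop, hCw⟩ := map_sqrt_mul hs11
  rw [← hF1def, ← hq1def] at hC1
  rw [← hF2def, ← hqbdef] at hCb
  rw [← hF3def, ← hqwdef] at hCw
  have hm1 : Measure.map q1 (volume.withDensity G1)
      = (ENNReal.ofReal c * C1) • chiSq ((n : ℝ) - a) := by
    have h : volume.withDensity G1 = ENNReal.ofReal c • volume.withDensity F1 := by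
      rw [hG1def, ← withDensity_smul _ hF1m]; rfl
    rw [h, Measure.map_smul, hC1, smul_smul]
  have hshearMP : MeasurePreserving shear (volume : Measure (ℝ × ℝ)) volume := by
    rw [hsheardef, Measure.volume_eq_prod]
    exact MeasurePreserving.skew_product (g := fun a y => y + a * c0)
      (MeasurePreserving.id _)
      (measurable_snd.add (measurable_fst.mul_const _))
      (Filter.Eventually.of_forall fun a =>
        (measurePreserving_add_right volume (a * c0)).map_eq)
  have hm23 : Measure.map q2 ((volume : Measure (ℝ × ℝ)).withDensity G23)
      = (Cb * Cw) • ((chiSq ((n : ℝ) - b)).prod (gaussianReal 0 1)) := by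
    have h1 : (volume : Measure (ℝ × ℝ)).withDensity G23
        = (volume : Measure (ℝ × ℝ)).withDensity
            (fun p => (fun z : ℝ × ℝ => F2 z.1 * F3 z.2) (shear p)) := rfl
    have h2 : Measure.map shear ((volume : Measure (ℝ × ℝ)).withDensity G23)
        = (volume.withDensity F2).prod (volume.withDensity F3) := by
      have hFm23 : Measurable (fun z : ℝ × ℝ => F2 z.1 * F3 z.2) :=
        (hF2m.comp measurable_fst).mul (hF3m.comp measurable_snd)
      rw [h1, map_withDensity_comp _ hshearm hFm23,
        hshearMP.map_eq, Measure.volume_eq_prod]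
      exact (Stmt5Aux.prod_withDensity hF2m hF3m).symm
    have h3 : q2 = (Prod.map qb qw) ∘ shear := by
      rw [hq2def, hsheardef]
      rfl
    rw [h3, ← Measure.map_map (hqbm.prodMap hqwm) hshearm, h2,
      ← Measure.map_prod_map _ _ hqbm hqwm, hCb, hCw]
    exact smul_prod_smul _ _ hCbtop hCwtop _ _
  have hT : Measure.map (fun p : ℝ × ℝ × ℝ => (p.2.2, (p.1, p.2.1)))
      ((chiSq ((n : ℝ) - a)).prod ((chiSq ((n : ℝ) - b)).prod (gaussianReal 0 1)))
      = (gaussianReal 0 1).prod ((chiSq ((n : ℝ) - a)).prod (chiSq ((n : ℝ) - b))) := by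
    have hTdef : (fun p : ℝ × ℝ × ℝ => (p.2.2, (p.1, p.2.1)))
        = Prod.swap ∘ ⇑(MeasurableEquiv.prodAssoc (α := ℝ) (β := ℝ) (γ := ℝ)).symm := rfl
    rw [hTdef, ← Measure.map_map measurable_swap (MeasurableEquiv.measurable _),
      show (chiSq ((n : ℝ) - a)).prod ((chiSq ((n : ℝ) - b)).prod (gaussianReal 0 1))
        = Measure.map (⇑(MeasurableEquiv.prodAssoc (α := ℝ) (β := ℝ) (γ := ℝ)))
            (((chiSq ((n : ℝ) - a)).prod (chiSq ((n : ℝ) - b))).prod (gaussianReal 0 1))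
        from (Measure.prodAssoc_prod).symm,
      MeasurableEquiv.map_symm_map, Measure.prod_swap]
  set T : ℝ × ℝ × ℝ → ℝ × ℝ × ℝ := fun p => (p.2.2, (p.1, p.2.1)) with hTdef2
  have hTm : Measurable T := by
    rw [hTdef2]
    exact (measurable_snd.comp measurable_snd).prodMk
      (measurable_fst.prodMk (measurable_fst.comp measurable_snd))
  set Φ : ℝ × ℝ × ℝ → ℝ × ℝ × ℝ := fun x => (qw (x.2.2 + x.2.1 * c0), (q1 x.1, qb x.2.1))
    with hΦdef
  have hΦm : Measurable Φ := by
    rw [hΦdef]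
    exact (hqwm.comp ((measurable_snd.comp measurable_snd).add
        ((measurable_fst.comp measurable_snd).mul_const _))).prodMk
      ((hq1m.comp measurable_fst).prodMk (hqbm.comp (measurable_fst.comp measurable_snd)))
  have hΦcomp : Φ = T ∘ (Prod.map q1 q2) := by
    rw [hΦdef, hTdef2, hq2def]
    rfl
  set γ : Measure (ℝ × ℝ × ℝ) :=
    (gaussianReal 0 1).prod ((chiSq ((n : ℝ) - a)).prod (chiSq ((n : ℝ) - b))) with hγdef
  have hΦμ : Measure.map Φ μ = ((ENNReal.ofReal c * C1) * (Cb * Cw)) • γ := by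
    rw [hΦcomp, ← Measure.map_map hTm (hq1m.prodMap hq2m), hμ,
      ← Measure.map_prod_map _ _ hq1m hq2m, hm1, hm23,
      smul_prod_smul _ _ (ENNReal.mul_ne_top ENNReal.ofReal_ne_top hC1top)
        (ENNReal.mul_ne_top hCbtop hCwtop) _ _,
      Measure.map_smul, hT, hγdef]
  have hΦμ' : Measure.map Φ μ = γ := by
    haveI : IsProbabilityMeasure (Measure.map Φ μ) :=
      Measure.isProbabilityMeasure_map hΦm.aemeasurable
    haveI : IsProbabilityMeasure γ := by rw [hγdef]; infer_instance
    have h := measure_univ (μ := Measure.map Φ μ)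
    rw [hΦμ] at h
    simp only [Measure.smul_apply, measure_univ, smul_eq_mul, mul_one] at h
    rw [hΦμ, h, one_smul]
  -- pointwise identification of the statistic
  set gfun : ℝ × ℝ × ℝ → ℝ :=
    fun x => -x.2.2 / Real.sqrt (x.1 ^ 2 + x.2.2 ^ 2) with hgfundef
  set Ffun : ℝ × ℝ × ℝ → ℝ := fun p =>
    (-p.1 / Real.sqrt p.2.1 + Real.sqrt (p.2.2 / p.2.1) * (r / Real.sqrt (1 - r ^ 2)))
      / Real.sqrt (1 + (-p.1 / Real.sqrt p.2.1
          + Real.sqrt (p.2.2 / p.2.1) * (r / Real.sqrt (1 - r ^ 2))) ^ 2) with hFfundef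
  have hgfunm : Measurable gfun := by
    rw [hgfundef]
    exact ((measurable_snd.comp measurable_snd).neg).div
      (((measurable_fst.pow_const 2).add
        ((measurable_snd.comp measurable_snd).pow_const 2)).sqrt)
  have hFfunm : Measurable Ffun := by
    rw [hFfundef]
    fun_prop
  have h1r : (0:ℝ) < 1 - r ^ 2 := by nlinarith
  have hkey : ∀ x : ℝ × ℝ × ℝ, 0 < x.1 → 0 < x.2.1 → gfun x = Ffun (Φ x) := by
    intro x hx1 hx2
    have hss11 : (0:ℝ) < Real.sqrt s11 := Real.sqrt_pos.2 hs11
    have h1rs : (0:ℝ) < Real.sqrt (1 - r ^ 2) := Real.sqrt_pos.2 h1r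
    simp only [hgfundef, hFfundef, hΦdef, hq1def, hqbdef, hqwdef]
    have hsa : Real.sqrt (s11 * x.1 ^ 2) = Real.sqrt s11 * x.1 := by
      rw [Real.sqrt_mul hs11.le, Real.sqrt_sq hx1.le]
    have hsb : Real.sqrt (tb * x.2.1 ^ 2 / (s11 * x.1 ^ 2))
        = Real.sqrt s22 * Real.sqrt (1 - r ^ 2) * x.2.1 / (Real.sqrt s11 * x.1) := by
      rw [Real.sqrt_div (by positivity) _, hsa, htbdef,
        Real.sqrt_mul (mul_nonneg hs22.le h1r.le) _, Real.sqrt_mul hs22.le,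
        Real.sqrt_sq hx2.le]
    have hc0' : c0 = r * (Real.sqrt s22 / Real.sqrt s11) := by
      rw [hc0def, Real.sqrt_div hs22.le]
    rw [hsa, hsb]
    have hy : -(Real.sqrt s11 * (x.2.2 + x.2.1 * c0)) / (Real.sqrt s11 * x.1)
        + Real.sqrt s22 * Real.sqrt (1 - r ^ 2) * x.2.1 / (Real.sqrt s11 * x.1)
          * (r / Real.sqrt (1 - r ^ 2)) = -x.2.2 / x.1 := by
      rw [hc0']
      field_simp
      all_goals ring
    rw [hy]
    have hsum : 1 + (-x.2.2 / x.1) ^ 2 = (x.1 ^ 2 + x.2.2 ^ 2) / x.1 ^ 2 := by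
      field_simp
      all_goals ring
    have hpos : (0:ℝ) < Real.sqrt (x.1 ^ 2 + x.2.2 ^ 2) := Real.sqrt_pos.2 (by positivity)
    rw [hsum, Real.sqrt_div (by positivity) _, Real.sqrt_sq hx1.le]
    rw [div_div_div_eq, mul_comm x.1 _, mul_div_mul_right _ _ hx1.ne']
  -- the bad set is null
  have hsmeas : MeasurableSet {x : ℝ × ℝ × ℝ | 0 < x.1 ∧ 0 < x.2.1} := by
    have : {x : ℝ × ℝ × ℝ | 0 < x.1 ∧ 0 < x.2.1}
        = (Prod.fst ⁻¹' Set.Ioi 0) ∩ ((Prod.fst ∘ Prod.snd) ⁻¹' Set.Ioi 0) := rfl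
    rw [this]
    exact (measurable_fst measurableSet_Ioi).inter
      ((measurable_fst.comp measurable_snd) measurableSet_Ioi)
  have hscompl : μ {x : ℝ × ℝ × ℝ | 0 < x.1 ∧ 0 < x.2.1}ᶜ = 0 := by
    rw [hmap, withDensity_apply _ hsmeas.compl]
    have hz : ∀ x ∈ {x : ℝ × ℝ × ℝ | 0 < x.1 ∧ 0 < x.2.1}ᶜ,
        ENNReal.ofReal (c * piabDensity n a b s11 s22 r x) = 0 := by
      intro x hx
      have : piabDensity n a b s11 s22 r x = 0 := if_neg hx
      rw [this, mul_zero, ENNReal.ofReal_zero]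
    rw [setLIntegral_congr_fun hsmeas.compl hz, lintegral_zero]
  have hae : gfun =ᵐ[μ] Ffun ∘ Φ := by
    refine ae_iff.mpr (measure_mono_null ?_ hscompl)
    intro x hx
    simp only [Set.mem_setOf_eq, Set.mem_compl_iff] at hx ⊢
    exact fun hcond => hx (hkey x hcond.1 hcond.2)
  calc Measure.map (fun ω => -(η ω).2.2 / Real.sqrt ((η ω).1 ^ 2 + (η ω).2.2 ^ 2)) P
      = Measure.map gfun μ := by
        rw [hμdef]
        exact (Measure.map_map hgfunm hηm).symm
    _ = Measure.map (Ffun ∘ Φ) μ := Measure.map_congr hae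
    _ = Measure.map Ffun (Measure.map Φ μ) := (Measure.map_map hFfunm hΦm).symm
    _ = Measure.map Ffun γ := by rw [hΦμ']
    _ = Measure.map
          (fun p : ℝ × ℝ × ℝ =>
            let y := -p.1 / Real.sqrt p.2.1
              + Real.sqrt (p.2.2 / p.2.1) * (r / Real.sqrt (1 - r ^ 2))
            y / Real.sqrt (1 + y ^ 2))
          ((gaussianReal 0 1).prod ((chiSq ((n : ℝ) - a)).prod (chiSq ((n : ℝ) - b)))) := by
        rw [hγdef, hFfundef]


end
end

section
/- Let n ≥ 3, c1, c2, d1, d2 ∈ ℝ, let h : (−1,1) → (0,∞) and g : (−1,1) → ℝ be measurable. For a 2×2 positive definite matrix S and parameters (σ1, σ2, ρ) with σ1, σ2 > 0, −1 < ρ < 1, define G(S, σ1, σ2, ρ) = N/D, where D is the integral over (s1, s2, t) ∈ (0,∞) × (0,∞) × (−1,1) of h(t) s1^{−(n−1+c1)} s2^{−(n−1+c2)} (1−t²)^{−(n−1)/2} exp(−½ trace(S Σ(s1,s2,t)^{−1})), with Σ(s1,s2,t) the 2×2 matrix with diagonal entries s1², s2² and off-diagonal entries s1 s2 t, and N is the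 same integral restricted to the set {(s1,s2,t) : s1^{d1} s2^{d2} g(t) < σ1^{d1} σ2^{d2} g(ρ)}; assume 0 < D < ∞ almost surely when S is the sample sum-of-squares matrix. If S = Σ_{k=1}^n (x_k − x̄)(x_k − x̄)' for an i.i.d. sample x_1, …, x_n from the bivariate normal model with parameters (μ1, μ2, σ1, σ2, ρ), then the distribution of the random variable G(S, σ1, σ2, ρ) depends on (μ1, μ2, σ1, σ2, ρ) only through ρ; in particular, for every α ∈ (0,1), P(G(S, σ1, σ2, ρ) < 1−α) takes the same value for all (μ1, μ2, σ1, σ2). -/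
open MeasureTheory ProbabilityTheory Real

noncomputable section

/-- Density of the bivariate normal distribution N₂((μ₁,μ₂), Σ(σ₁,σ₂,ρ)). -/
def bivNormalPDF (μ₁ μ₂ σ₁ σ₂ ρ : ℝ) (x : ℝ × ℝ) : ℝ :=
  (2 * π * σ₁ * σ₂ * Real.sqrt (1 - ρ ^ 2))⁻¹ *
    Real.exp (-(σ₂ ^ 2 * (x.1 - μ₁) ^ 2 + σ₁ ^ 2 * (x.2 - μ₂) ^ 2
        - 2 * ρ * σ₁ * σ₂ * (x.1 - μ₁) * (x.2 - μ₂)) /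
      (2 * σ₁ ^ 2 * σ₂ ^ 2 * (1 - ρ ^ 2)))

/-- The bivariate normal distribution on `ℝ × ℝ`. -/
def bivNormal (μ₁ μ₂ σ₁ σ₂ ρ : ℝ) : Measure (ℝ × ℝ) :=
  volume.withDensity fun x => ENNReal.ofReal (bivNormalPDF μ₁ μ₂ σ₁ σ₂ ρ x)

/-- Law of an i.i.d. sample of size `n` from the bivariate normal model. -/
def sampleLaw (n : ℕ) (μ₁ μ₂ σ₁ σ₂ ρ : ℝ) : Measure (Fin n → ℝ × ℝ) :=
  Measure.pi fun _ => bivNormal μ₁ μ₂ σ₁ σ₂ ρ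

def xbar1 {n : ℕ} (x : Fin n → ℝ × ℝ) : ℝ := (∑ k, (x k).1) / n
def xbar2 {n : ℕ} (x : Fin n → ℝ × ℝ) : ℝ := (∑ k, (x k).2) / n
def s11 {n : ℕ} (x : Fin n → ℝ × ℝ) : ℝ := ∑ k, ((x k).1 - xbar1 x) ^ 2
def s22 {n : ℕ} (x : Fin n → ℝ × ℝ) : ℝ := ∑ k, ((x k).2 - xbar2 x) ^ 2
def s12 {n : ℕ} (x : Fin n → ℝ × ℝ) : ℝ :=
  ∑ k, ((x k).1 - xbar1 x) * ((x k).2 - xbar2 x)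

/-- Sample correlation coefficient. -/
def sampleCorr {n : ℕ} (x : Fin n → ℝ × ℝ) : ℝ := s12 x / Real.sqrt (s11 x * s22 x)

/-- γ-quantile of a measure on ℝ: `inf {y | μ(-∞, y] ≥ γ}`. -/
def mQuantile (μ : Measure ℝ) (γ : ℝ) : ℝ := sInf {y : ℝ | γ ≤ (μ (Set.Iic y)).toReal}

/-- The covariance matrix Σ(s₁, s₂, t). -/
def SigMat (s1 s2 t : ℝ) : Matrix (Fin 2) (Fin 2) ℝ :=
  !![s1 ^ 2, s1 * s2 * t; s1 * s2 * t, s2 ^ 2]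

/-- The common integrand in the definition of G. -/
def Gintegrand (n : ℕ) (c1 c2 : ℝ) (h : ℝ → ℝ) (S : Matrix (Fin 2) (Fin 2) ℝ)
    (q : ℝ × ℝ × ℝ) : ENNReal :=
  if 0 < q.1 ∧ 0 < q.2.1 ∧ q.2.2 ∈ Set.Ioo (-1 : ℝ) 1 then
    ENNReal.ofReal (h q.2.2 * q.1 ^ (-((n : ℝ) - 1 + c1)) * q.2.1 ^ (-((n : ℝ) - 1 + c2))
      * (1 - q.2.2 ^ 2) ^ (-(((n : ℝ) - 1) / 2))
      * Real.exp (-(Matrix.trace (S * (SigMat q.1 q.2.1 q.2.2)⁻¹)) / 2))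
  else 0

/-- Denominator of G: the integral over all of (0,∞) × (0,∞) × (-1,1). -/
def Gdenom (n : ℕ) (c1 c2 : ℝ) (h : ℝ → ℝ) (S : Matrix (Fin 2) (Fin 2) ℝ) : ENNReal :=
  ∫⁻ q : ℝ × ℝ × ℝ, Gintegrand n c1 c2 h S q

/-- Numerator of G: the same integral restricted to
`{(s1,s2,t) : s1^d1 s2^d2 g(t) < σ1^d1 σ2^d2 g(ρ)}`. -/
def Gnum (n : ℕ) (c1 c2 d1 d2 : ℝ) (h g : ℝ → ℝ) (σ1 σ2 ρ : ℝ)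
    (S : Matrix (Fin 2) (Fin 2) ℝ) : ENNReal :=
  ∫⁻ q : ℝ × ℝ × ℝ,
    Set.indicator {q : ℝ × ℝ × ℝ | q.1 ^ d1 * q.2.1 ^ d2 * g q.2.2 < σ1 ^ d1 * σ2 ^ d2 * g ρ}
      (Gintegrand n c1 c2 h S) q

/-- The posterior probability `G(S, σ1, σ2, ρ)` of the set `{θ* < θ}`. -/
def Gfun (n : ℕ) (c1 c2 d1 d2 : ℝ) (h g : ℝ → ℝ) (σ1 σ2 ρ : ℝ)
    (S : Matrix (Fin 2) (Fin 2) ℝ) : ℝ :=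
  (Gnum n c1 c2 d1 d2 h g σ1 σ2 ρ S / Gdenom n c1 c2 h S).toReal

/-- The sample sum-of-squares matrix. -/
def Smat {n : ℕ} (x : Fin n → ℝ × ℝ) : Matrix (Fin 2) (Fin 2) ℝ :=
  !![s11 x, s12 x; s12 x, s22 x]

/-! ### Auxiliary lemmas -/

section Aux

lemma pos_cancel {a x : ℝ} (ha : 0 < a) (hx : 0 < a * x) : 0 < x := by nlinarith

lemma smul_prod_meas {α β : Type*} [MeasurableSpace α] [MeasurableSpace β]
    (c : ENNReal) (μ : Measure α) (ν : Measure β) [SFinite μ] [SFinite ν] :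
    (c • μ).prod ν = c • (μ.prod ν) := by
  ext s hs
  rw [Measure.smul_apply, Measure.prod_apply hs, Measure.prod_apply hs,
    lintegral_smul_measure, smul_eq_mul]

lemma prod_smul_meas {α β : Type*} [MeasurableSpace α] [MeasurableSpace β]
    (c : ENNReal) (hc : c ≠ ⊤) (μ : Measure α) (ν : Measure β) [SFinite μ] [SFinite ν] :
    μ.prod (c • ν) = c • (μ.prod ν) := by
  ext s hs
  rw [Measure.smul_apply, Measure.prod_apply hs, Measure.prod_apply hs, smul_eq_mul,
    ← lintegral_const_mul' _ _ hc]
  simp only [Measure.smul_apply, smul_eq_mul]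

lemma map_affine_volume {a : ℝ} (c : ℝ) (ha : 0 < a) :
    Measure.map (fun x : ℝ => a * x + c) volume = ENNReal.ofReal a⁻¹ • volume := by
  have h1 : (fun x : ℝ => a * x + c) = (fun y : ℝ => y + c) ∘ (a * ·) := rfl
  rw [h1, ← Measure.map_map (measurable_add_const c) (measurable_const_mul a),
    Real.map_volume_mul_left ha.ne', Measure.map_smul, map_add_right_eq_self,
    abs_of_pos (inv_pos.mpr ha)]

lemma map_withDensity_equiv {α β : Type*} [MeasurableSpace α] [MeasurableSpace β]
    (e : α ≃ᵐ β) (μ : Measure α) (f : α → ENNReal) (hf : Measurable f) :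
    Measure.map e (μ.withDensity f) = (Measure.map e μ).withDensity fun y => f (e.symm y) := by
  ext s hs
  rw [Measure.map_apply e.measurable hs, withDensity_apply _ (e.measurable hs),
    withDensity_apply _ hs,
    setLIntegral_map (f := fun y => f (e.symm y)) hs (hf.comp e.symm.measurable) e.measurable]
  simp only [MeasurableEquiv.symm_apply_apply]

/-- The affine equivalence of the plane. -/
def affE2 (a b c d : ℝ) (ha : a ≠ 0) (hb : b ≠ 0) : (ℝ × ℝ) ≃ᵐ (ℝ × ℝ) where
  toEquiv :=
  { toFun := fun y => (a * y.1 + c, b * y.2 + d)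
    invFun := fun z => ((z.1 - c) / a, (z.2 - d) / b)
    left_inv := fun y => by
      obtain ⟨y1, y2⟩ := y
      simp only [Prod.mk.injEq]
      refine ⟨?_, ?_⟩
      · rw [add_sub_cancel_right, mul_div_cancel_left₀ _ ha]
      · rw [add_sub_cancel_right, mul_div_cancel_left₀ _ hb]
    right_inv := fun z => by
      obtain ⟨z1, z2⟩ := z
      simp only [Prod.mk.injEq]
      refine ⟨?_, ?_⟩
      · rw [mul_comm a, div_mul_cancel₀ _ ha, sub_add_cancel]
      · rw [mul_comm b, div_mul_cancel₀ _ hb, sub_add_cancel] }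
  measurable_toFun :=
    ((measurable_fst.const_mul a).add_const c).prodMk ((measurable_snd.const_mul b).add_const d)
  measurable_invFun :=
    ((measurable_fst.sub_const c).div_const a).prodMk ((measurable_snd.sub_const d).div_const b)

end Aux

section Aux2

lemma bivNormalPDF_scale (μ1 μ2 σ1 σ2 ρ a b c d : ℝ) (ha : a ≠ 0) (hb : b ≠ 0)
    (hσ1 : σ1 ≠ 0) (hσ2 : σ2 ≠ 0) (hρ : 1 - ρ ^ 2 ≠ 0) (y : ℝ × ℝ) :
    bivNormalPDF (a * μ1 + c) (b * μ2 + d) (a * σ1) (b * σ2) ρ y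
      = (a * b)⁻¹ * bivNormalPDF μ1 μ2 σ1 σ2 ρ ((y.1 - c) / a, (y.2 - d) / b) := by
  obtain ⟨y1, y2⟩ := y
  unfold bivNormalPDF
  dsimp only
  have h1 : (y1 - c) / a - μ1 = (y1 - (a * μ1 + c)) / a := by field_simp; ring
  have h2 : (y2 - d) / b - μ2 = (y2 - (b * μ2 + d)) / b := by field_simp; ring
  rw [h1, h2]
  have harg :
      -(σ2 ^ 2 * ((y1 - (a * μ1 + c)) / a) ^ 2 + σ1 ^ 2 * ((y2 - (b * μ2 + d)) / b) ^ 2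
          - 2 * ρ * σ1 * σ2 * ((y1 - (a * μ1 + c)) / a) * ((y2 - (b * μ2 + d)) / b)) /
        (2 * σ1 ^ 2 * σ2 ^ 2 * (1 - ρ ^ 2))
      = -((b * σ2) ^ 2 * (y1 - (a * μ1 + c)) ^ 2 + (a * σ1) ^ 2 * (y2 - (b * μ2 + d)) ^ 2
          - 2 * ρ * (a * σ1) * (b * σ2) * (y1 - (a * μ1 + c)) * (y2 - (b * μ2 + d))) /
        (2 * (a * σ1) ^ 2 * (b * σ2) ^ 2 * (1 - ρ ^ 2)) := by
    field_simp
  rw [← harg]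
  rw [show 2 * π * (a * σ1) * (b * σ2) * Real.sqrt (1 - ρ ^ 2)
        = (a * b) * (2 * π * σ1 * σ2 * Real.sqrt (1 - ρ ^ 2)) by ring, mul_inv, mul_assoc]

lemma bivNormal_map_affine (μ1 μ2 σ1 σ2 ρ a b c d : ℝ) (ha : 0 < a) (hb : 0 < b)
    (hσ1 : σ1 ≠ 0) (hσ2 : σ2 ≠ 0) (hρ : 1 - ρ ^ 2 ≠ 0) :
    Measure.map (fun y : ℝ × ℝ => (a * y.1 + c, b * y.2 + d)) (bivNormal μ1 μ2 σ1 σ2 ρ)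
      = bivNormal (a * μ1 + c) (b * μ2 + d) (a * σ1) (b * σ2) ρ := by
  have hpdfm : Measurable fun x : ℝ × ℝ => ENNReal.ofReal (bivNormalPDF μ1 μ2 σ1 σ2 ρ x) := by
    apply Measurable.ennreal_ofReal
    unfold bivNormalPDF
    fun_prop
  have he : (fun y : ℝ × ℝ => (a * y.1 + c, b * y.2 + d)) = ⇑(affE2 a b c d ha.ne' hb.ne') :=
    rfl
  have hg : Measurable fun y : ℝ × ℝ =>
      ENNReal.ofReal (bivNormalPDF μ1 μ2 σ1 σ2 ρ ((affE2 a b c d ha.ne' hb.ne').symm y)) :=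
    hpdfm.comp (affE2 a b c d ha.ne' hb.ne').symm.measurable
  rw [bivNormal, he, map_withDensity_equiv _ _ _ hpdfm]
  have hmv : Measure.map (⇑(affE2 a b c d ha.ne' hb.ne')) volume
      = ENNReal.ofReal ((a * b)⁻¹) • volume := by
    have h2 : ⇑(affE2 a b c d ha.ne' hb.ne')
        = Prod.map (fun x : ℝ => a * x + c) (fun x : ℝ => b * x + d) := rfl
    rw [h2, Measure.volume_eq_prod, ← Measure.map_prod_map _ _
        ((measurable_const_mul a).add_const c) ((measurable_const_mul b).add_const d),
      map_affine_volume c ha, map_affine_volume d hb,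
      smul_prod_meas, prod_smul_meas _ ENNReal.ofReal_ne_top, smul_smul,
      ← ENNReal.ofReal_mul (by positivity), ← Measure.volume_eq_prod, mul_inv]
  rw [hmv, withDensity_smul_measure, bivNormal,
    ← withDensity_smul _ hg]
  congr 1
  funext y
  simp only [Pi.smul_apply, smul_eq_mul]
  rw [← ENNReal.ofReal_mul (by positivity)]
  congr 1
  exact (bivNormalPDF_scale μ1 μ2 σ1 σ2 ρ a b c d ha.ne' hb.ne' hσ1 hσ2 hρ y).symm

lemma sigMat_inv (s1 s2 t : ℝ) :
    (SigMat s1 s2 t)⁻¹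
      = (s1 ^ 2 * s2 ^ 2 - s1 * s2 * t * (s1 * s2 * t))⁻¹ •
          !![s2 ^ 2, -(s1 * s2 * t); -(s1 * s2 * t), s1 ^ 2] := by
  rw [show SigMat s1 s2 t = !![s1 ^ 2, s1 * s2 * t; s1 * s2 * t, s2 ^ 2] from rfl,
    Matrix.inv_def, Matrix.adjugate_fin_two, Matrix.det_fin_two_of, Ring.inverse_eq_inv]
  congr 1

lemma trace_mul_inv (S : Matrix (Fin 2) (Fin 2) ℝ) (s1 s2 t : ℝ) :
    Matrix.trace (S * (SigMat s1 s2 t)⁻¹)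
      = (s1 ^ 2 * s2 ^ 2 - s1 * s2 * t * (s1 * s2 * t))⁻¹ *
          (S 0 0 * s2 ^ 2 - (S 0 1 + S 1 0) * (s1 * s2 * t) + S 1 1 * s1 ^ 2) := by
  rw [sigMat_inv]
  simp [Matrix.trace_fin_two, Matrix.mul_apply, Fin.sum_univ_two]
  ring

lemma inv_scale_helper {a b : ℝ} (X Y : ℝ) (ha : a ≠ 0) (hb : b ≠ 0) :
    ((a ^ 2 * b ^ 2) * X)⁻¹ * ((a ^ 2 * b ^ 2) * Y) = X⁻¹ * Y := by
  rw [mul_inv, show (a ^ 2 * b ^ 2)⁻¹ * X⁻¹ * ((a ^ 2 * b ^ 2) * Y)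
      = ((a ^ 2 * b ^ 2)⁻¹ * (a ^ 2 * b ^ 2)) * (X⁻¹ * Y) from by ring,
    inv_mul_cancel₀ (by positivity), one_mul]

lemma trace_scale (p r s s1 s2 t : ℝ) {a b : ℝ} (ha : a ≠ 0) (hb : b ≠ 0) :
    Matrix.trace (!![a ^ 2 * p, a * b * r; a * b * r, b ^ 2 * s]
        * (SigMat (a * s1) (b * s2) t)⁻¹)
      = Matrix.trace (!![p, r; r, s] * (SigMat s1 s2 t)⁻¹) := by
  rw [trace_mul_inv, trace_mul_inv]
  have e00 : (!![a ^ 2 * p, a * b * r; a * b * r, b ^ 2 * s]) 0 0 = a ^ 2 * p := by simp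
  have e01 : (!![a ^ 2 * p, a * b * r; a * b * r, b ^ 2 * s]) 0 1 = a * b * r := by simp
  have e10 : (!![a ^ 2 * p, a * b * r; a * b * r, b ^ 2 * s]) 1 0 = a * b * r := by simp
  have e11 : (!![a ^ 2 * p, a * b * r; a * b * r, b ^ 2 * s]) 1 1 = b ^ 2 * s := by simp
  have f00 : (!![p, r; r, s]) 0 0 = p := by simp
  have f01 : (!![p, r; r, s]) 0 1 = r := by simp
  have f10 : (!![p, r; r, s]) 1 0 = r := by simp
  have f11 : (!![p, r; r, s]) 1 1 = s := by simp
  rw [e00, e01, e10, e11, f00, f01, f10, f11]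
  rw [show (a * s1) ^ 2 * (b * s2) ^ 2 - a * s1 * (b * s2) * t * (a * s1 * (b * s2) * t)
      = (a ^ 2 * b ^ 2) * (s1 ^ 2 * s2 ^ 2 - s1 * s2 * t * (s1 * s2 * t)) from by ring]
  rw [show a ^ 2 * p * (b * s2) ^ 2 - (a * b * r + a * b * r) * (a * s1 * (b * s2) * t)
        + b ^ 2 * s * (a * s1) ^ 2
      = (a ^ 2 * b ^ 2) * (p * s2 ^ 2 - (r + r) * (s1 * s2 * t) + s * s1 ^ 2) from by ring]
  exact inv_scale_helper _ _ ha hb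

end Aux2

section Aux3

lemma trace_lit (v : ℝ × ℝ × ℝ) (s1 s2 t : ℝ) :
    Matrix.trace (!![v.1, v.2.1; v.2.1, v.2.2] * (SigMat s1 s2 t)⁻¹)
      = (s1 ^ 2 * s2 ^ 2 - s1 * s2 * t * (s1 * s2 * t))⁻¹ *
          (v.1 * s2 ^ 2 - (v.2.1 + v.2.1) * (s1 * s2 * t) + v.2.2 * s1 ^ 2) := by
  rw [trace_mul_inv]
  simp

lemma measurable_Gintegrand_prod (n : ℕ) (c1 c2 : ℝ) (h : ℝ → ℝ) (hh : Measurable h) :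
    Measurable fun P : (ℝ × ℝ × ℝ) × (ℝ × ℝ × ℝ) =>
      Gintegrand n c1 c2 h !![P.1.1, P.1.2.1; P.1.2.1, P.1.2.2] P.2 := by
  unfold Gintegrand
  have s1m : Measurable fun P : (ℝ × ℝ × ℝ) × (ℝ × ℝ × ℝ) => P.2.1 :=
    measurable_snd.fst
  have s2m : Measurable fun P : (ℝ × ℝ × ℝ) × (ℝ × ℝ × ℝ) => P.2.2.1 :=
    measurable_snd.snd.fst
  have tm : Measurable fun P : (ℝ × ℝ × ℝ) × (ℝ × ℝ × ℝ) => P.2.2.2 :=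
    measurable_snd.snd.snd
  have hset : MeasurableSet {P : (ℝ × ℝ × ℝ) × (ℝ × ℝ × ℝ) |
      0 < P.2.1 ∧ 0 < P.2.2.1 ∧ P.2.2.2 ∈ Set.Ioo (-1 : ℝ) 1} :=
    (measurableSet_lt measurable_const s1m).inter
      ((measurableSet_lt measurable_const s2m).inter (tm measurableSet_Ioo))
  apply Measurable.ite hset _ measurable_const
  apply Measurable.ennreal_ofReal
  simp only [trace_lit]
  refine ((((hh.comp tm).mul (s1m.pow measurable_const)).mul
      (s2m.pow measurable_const)).mul
      ((measurable_const.sub (tm.pow_const 2)).pow measurable_const)).mul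
      (Real.measurable_exp.comp ?_)
  refine Measurable.div_const (Measurable.neg ?_) 2
  refine Measurable.mul (Measurable.inv ?_) ?_
  · exact ((s1m.pow_const 2).mul (s2m.pow_const 2)).sub
      (((s1m.mul s2m).mul tm).mul ((s1m.mul s2m).mul tm))
  · exact ((measurable_fst.fst.mul (s2m.pow_const 2)).sub
        ((measurable_fst.snd.fst.add measurable_fst.snd.fst).mul ((s1m.mul s2m).mul tm))).add
      (measurable_fst.snd.snd.mul (s1m.pow_const 2))

lemma measurable_Gintegrand (n : ℕ) (c1 c2 : ℝ) (h : ℝ → ℝ) (hh : Measurable h)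
    (p r s : ℝ) : Measurable (Gintegrand n c1 c2 h !![p, r; r, s]) :=
  (measurable_Gintegrand_prod n c1 c2 h hh).comp
    (measurable_const.prodMk measurable_id : Measurable fun q : ℝ × ℝ × ℝ => (((p, r, s) : ℝ × ℝ × ℝ), q))

lemma measurableSet_A (d1 d2 : ℝ) (g : ℝ → ℝ) (hg : Measurable g) (C : ℝ) :
    MeasurableSet {q : ℝ × ℝ × ℝ | q.1 ^ d1 * q.2.1 ^ d2 * g q.2.2 < C} :=
  measurableSet_lt (((measurable_fst.pow measurable_const).mul
    (measurable_snd.fst.pow measurable_const)).mul (hg.comp measurable_snd.snd))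
    measurable_const

lemma measurable_GfunV (n : ℕ) (c1 c2 d1 d2 : ℝ) (h g : ℝ → ℝ) (σ1 σ2 ρ : ℝ)
    (hh : Measurable h) (hgm : Measurable g) :
    Measurable fun v : ℝ × ℝ × ℝ =>
      Gfun n c1 c2 d1 d2 h g σ1 σ2 ρ !![v.1, v.2.1; v.2.1, v.2.2] := by
  unfold Gfun Gnum Gdenom
  apply Measurable.ennreal_toReal
  apply Measurable.div
  · have hF : Measurable fun P : (ℝ × ℝ × ℝ) × (ℝ × ℝ × ℝ) =>
        Set.indicator {q : ℝ × ℝ × ℝ | q.1 ^ d1 * q.2.1 ^ d2 * g q.2.2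
            < σ1 ^ d1 * σ2 ^ d2 * g ρ}
          (Gintegrand n c1 c2 h !![P.1.1, P.1.2.1; P.1.2.1, P.1.2.2]) P.2 := by
      simp only [Set.indicator_apply]
      exact Measurable.ite (measurable_snd (measurableSet_A d1 d2 g hgm _))
        (measurable_Gintegrand_prod n c1 c2 h hh) measurable_const
    exact hF.lintegral_prod_right'
  · exact (measurable_Gintegrand_prod n c1 c2 h hh).lintegral_prod_right'

lemma measurable_s11 {n : ℕ} : Measurable (s11 (n := n)) := by
  unfold s11 xbar1
  apply Finset.measurable_sum
  intro k _
  exact (((measurable_pi_apply k).fst).sub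
    ((Finset.measurable_sum _ fun i _ => (measurable_pi_apply i).fst).div_const _)).pow_const 2

lemma measurable_s22 {n : ℕ} : Measurable (s22 (n := n)) := by
  unfold s22 xbar2
  apply Finset.measurable_sum
  intro k _
  exact (((measurable_pi_apply k).snd).sub
    ((Finset.measurable_sum _ fun i _ => (measurable_pi_apply i).snd).div_const _)).pow_const 2

lemma measurable_s12 {n : ℕ} : Measurable (s12 (n := n)) := by
  unfold s12 xbar1 xbar2
  apply Finset.measurable_sum
  intro k _
  exact (((measurable_pi_apply k).fst).sub
    ((Finset.measurable_sum _ fun i _ => (measurable_pi_apply i).fst).div_const _)).mul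
    (((measurable_pi_apply k).snd).sub
    ((Finset.measurable_sum _ fun i _ => (measurable_pi_apply i).snd).div_const _))

lemma measurable_Gfun_Smat (n : ℕ) (c1 c2 d1 d2 : ℝ) (h g : ℝ → ℝ) (σ1 σ2 ρ : ℝ)
    (hh : Measurable h) (hgm : Measurable g) :
    Measurable fun x : Fin n → ℝ × ℝ => Gfun n c1 c2 d1 d2 h g σ1 σ2 ρ (Smat x) := by
  have h2 : (fun x : Fin n → ℝ × ℝ => Gfun n c1 c2 d1 d2 h g σ1 σ2 ρ (Smat x))
      = (fun v : ℝ × ℝ × ℝ => Gfun n c1 c2 d1 d2 h g σ1 σ2 ρ !![v.1, v.2.1; v.2.1, v.2.2])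
        ∘ fun x => (s11 x, s12 x, s22 x) := by
    funext x
    simp only [Function.comp_apply]
    rfl
  rw [h2]
  exact (measurable_GfunV n c1 c2 d1 d2 h g σ1 σ2 ρ hh hgm).comp
    (measurable_s11.prodMk (measurable_s12.prodMk measurable_s22))

end Aux3

section Aux4

lemma lintegral_scale3 {F : ℝ × ℝ × ℝ → ENNReal} (hF : Measurable F) {a b : ℝ}
    (ha : 0 < a) (hb : 0 < b) :
    (∫⁻ q, F q) = ENNReal.ofReal (a * b) * ∫⁻ q : ℝ × ℝ × ℝ, F (a * q.1, b * q.2.1, q.2.2) := by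
  have hψ : Measurable fun q : ℝ × ℝ × ℝ => ((a * q.1, b * q.2.1, q.2.2) : ℝ × ℝ × ℝ) :=
    (measurable_fst.const_mul a).prodMk
      ((measurable_snd.fst.const_mul b).prodMk measurable_snd.snd)
  have hinner : Measure.map (fun p : ℝ × ℝ => ((b * p.1, p.2) : ℝ × ℝ)) volume
      = ENNReal.ofReal b⁻¹ • volume := by
    have h3 : (fun p : ℝ × ℝ => ((b * p.1, p.2) : ℝ × ℝ)) = Prod.map (b * ·) id := rfl
    rw [h3, Measure.volume_eq_prod,
      ← Measure.map_prod_map _ _ (measurable_const_mul b) measurable_id, Measure.map_id,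
      Real.map_volume_mul_left hb.ne', smul_prod_meas, ← Measure.volume_eq_prod,
      abs_of_pos (inv_pos.mpr hb)]
  have hmap : Measure.map (fun q : ℝ × ℝ × ℝ => ((a * q.1, b * q.2.1, q.2.2) : ℝ × ℝ × ℝ)) volume
      = ENNReal.ofReal ((a * b)⁻¹) • volume := by
    have houter : (fun q : ℝ × ℝ × ℝ => ((a * q.1, b * q.2.1, q.2.2) : ℝ × ℝ × ℝ))
        = Prod.map (a * ·) (fun p : ℝ × ℝ => (b * p.1, p.2)) := rfl
    rw [houter, Measure.volume_eq_prod,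
      ← Measure.map_prod_map _ _ (measurable_const_mul a)
        ((measurable_fst.const_mul b).prodMk measurable_snd),
      Real.map_volume_mul_left ha.ne', hinner, smul_prod_meas,
      prod_smul_meas _ ENNReal.ofReal_ne_top, smul_smul, abs_of_pos (inv_pos.mpr ha),
      ← ENNReal.ofReal_mul (by positivity), ← Measure.volume_eq_prod, mul_inv]
  have h0 := lintegral_map (μ := (volume : Measure (ℝ × ℝ × ℝ))) hF hψ
  rw [hmap, lintegral_smul_measure, smul_eq_mul] at h0
  rw [← h0, ← mul_assoc, ← ENNReal.ofReal_mul (by positivity),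
    mul_inv_cancel₀ (by positivity), ENNReal.ofReal_one, one_mul]

lemma Gintegrand_scale (n : ℕ) (c1 c2 : ℝ) (h : ℝ → ℝ) (p r s : ℝ) {a b : ℝ}
    (ha : 0 < a) (hb : 0 < b) (q : ℝ × ℝ × ℝ) :
    Gintegrand n c1 c2 h !![a ^ 2 * p, a * b * r; a * b * r, b ^ 2 * s]
        (a * q.1, b * q.2.1, q.2.2)
      = ENNReal.ofReal (a ^ (-((n : ℝ) - 1 + c1)) * b ^ (-((n : ℝ) - 1 + c2)))
          * Gintegrand n c1 c2 h !![p, r; r, s] q := by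
  unfold Gintegrand
  dsimp only
  by_cases hq : 0 < q.1 ∧ 0 < q.2.1 ∧ q.2.2 ∈ Set.Ioo (-1 : ℝ) 1
  · obtain ⟨h1, h2, h3⟩ := hq
    rw [if_pos ⟨mul_pos ha h1, mul_pos hb h2, h3⟩, if_pos ⟨h1, h2, h3⟩,
      trace_scale p r s q.1 q.2.1 q.2.2 ha.ne' hb.ne',
      Real.mul_rpow ha.le h1.le, Real.mul_rpow hb.le h2.le,
      ← ENNReal.ofReal_mul (by positivity)]
    congr 1
    ring
  · rw [if_neg hq, if_neg, mul_zero]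
    rintro ⟨hh1, hh2, hh3⟩
    exact hq ⟨pos_cancel ha hh1, pos_cancel hb hh2, hh3⟩

lemma Gdenom_scale (n : ℕ) (c1 c2 : ℝ) (h : ℝ → ℝ) (hh : Measurable h) (p r s : ℝ)
    {a b : ℝ} (ha : 0 < a) (hb : 0 < b) :
    Gdenom n c1 c2 h !![a ^ 2 * p, a * b * r; a * b * r, b ^ 2 * s]
      = (ENNReal.ofReal (a * b)
          * ENNReal.ofReal (a ^ (-((n : ℝ) - 1 + c1)) * b ^ (-((n : ℝ) - 1 + c2))))
        * Gdenom n c1 c2 h !![p, r; r, s] := by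
  unfold Gdenom
  rw [lintegral_scale3 (measurable_Gintegrand n c1 c2 h hh _ _ _) ha hb]
  simp only [Gintegrand_scale n c1 c2 h p r s ha hb]
  rw [lintegral_const_mul' _ _ ENNReal.ofReal_ne_top, ← mul_assoc]

lemma Gnum_scale (n : ℕ) (c1 c2 d1 d2 : ℝ) (h g : ℝ → ℝ) (hh : Measurable h)
    (hgm : Measurable g) (ρ σ1 σ2 p r s : ℝ) {a b : ℝ} (ha : 0 < a) (hb : 0 < b)
    (hσ1 : 0 ≤ σ1) (hσ2 : 0 ≤ σ2) :
    Gnum n c1 c2 d1 d2 h g (a * σ1) (b * σ2) ρ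
        !![a ^ 2 * p, a * b * r; a * b * r, b ^ 2 * s]
      = (ENNReal.ofReal (a * b)
          * ENNReal.ofReal (a ^ (-((n : ℝ) - 1 + c1)) * b ^ (-((n : ℝ) - 1 + c2))))
        * Gnum n c1 c2 d1 d2 h g σ1 σ2 ρ !![p, r; r, s] := by
  unfold Gnum
  rw [lintegral_scale3 ((measurable_Gintegrand n c1 c2 h hh _ _ _).indicator
      (measurableSet_A d1 d2 g hgm _)) ha hb]
  have key : ∀ q : ℝ × ℝ × ℝ,
      Set.indicator {q : ℝ × ℝ × ℝ | q.1 ^ d1 * q.2.1 ^ d2 * g q.2.2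
          < (a * σ1) ^ d1 * (b * σ2) ^ d2 * g ρ}
        (Gintegrand n c1 c2 h !![a ^ 2 * p, a * b * r; a * b * r, b ^ 2 * s])
        (a * q.1, b * q.2.1, q.2.2)
      = ENNReal.ofReal (a ^ (-((n : ℝ) - 1 + c1)) * b ^ (-((n : ℝ) - 1 + c2)))
        * Set.indicator {q : ℝ × ℝ × ℝ | q.1 ^ d1 * q.2.1 ^ d2 * g q.2.2
            < σ1 ^ d1 * σ2 ^ d2 * g ρ}
          (Gintegrand n c1 c2 h !![p, r; r, s]) q := by
    intro q
    by_cases hq : 0 < q.1 ∧ 0 < q.2.1 ∧ q.2.2 ∈ Set.Ioo (-1 : ℝ) 1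
    · have hmem : ((a * q.1, b * q.2.1, q.2.2) : ℝ × ℝ × ℝ) ∈
          {q : ℝ × ℝ × ℝ | q.1 ^ d1 * q.2.1 ^ d2 * g q.2.2
            < (a * σ1) ^ d1 * (b * σ2) ^ d2 * g ρ}
          ↔ q ∈ {q : ℝ × ℝ × ℝ | q.1 ^ d1 * q.2.1 ^ d2 * g q.2.2
            < σ1 ^ d1 * σ2 ^ d2 * g ρ} := by
        obtain ⟨h1, h2, _⟩ := hq
        simp only [Set.mem_setOf_eq]
        rw [Real.mul_rpow ha.le h1.le, Real.mul_rpow hb.le h2.le,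
          Real.mul_rpow ha.le hσ1, Real.mul_rpow hb.le hσ2,
          show a ^ d1 * q.1 ^ d1 * (b ^ d2 * q.2.1 ^ d2) * g q.2.2
            = (a ^ d1 * b ^ d2) * (q.1 ^ d1 * q.2.1 ^ d2 * g q.2.2) from by ring,
          show a ^ d1 * σ1 ^ d1 * (b ^ d2 * σ2 ^ d2) * g ρ
            = (a ^ d1 * b ^ d2) * (σ1 ^ d1 * σ2 ^ d2 * g ρ) from by ring]
        exact mul_lt_mul_iff_right₀ (by positivity)
      by_cases hmem2 : q ∈ {q : ℝ × ℝ × ℝ | q.1 ^ d1 * q.2.1 ^ d2 * g q.2.2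
          < σ1 ^ d1 * σ2 ^ d2 * g ρ}
      · rw [Set.indicator_of_mem (hmem.mpr hmem2), Set.indicator_of_mem hmem2,
          Gintegrand_scale n c1 c2 h p r s ha hb]
      · rw [Set.indicator_of_notMem (fun hc => hmem2 (hmem.mp hc)),
          Set.indicator_of_notMem hmem2, mul_zero]
    · have hz1 : Gintegrand n c1 c2 h !![a ^ 2 * p, a * b * r; a * b * r, b ^ 2 * s]
          (a * q.1, b * q.2.1, q.2.2) = 0 := by
        rw [Gintegrand, if_neg]
        dsimp only
        rintro ⟨hh1, hh2, hh3⟩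
        exact hq ⟨pos_cancel ha hh1, pos_cancel hb hh2, hh3⟩
      have hz2 : Gintegrand n c1 c2 h !![p, r; r, s] q = 0 := by
        rw [Gintegrand, if_neg hq]
      rw [Set.indicator_apply, Set.indicator_apply, hz1, hz2, ite_self, ite_self, mul_zero]
  simp only [key]
  rw [lintegral_const_mul' _ _ ENNReal.ofReal_ne_top, ← mul_assoc]

lemma Gfun_scale (n : ℕ) (c1 c2 d1 d2 : ℝ) (h g : ℝ → ℝ) (hh : Measurable h)
    (hgm : Measurable g) (ρ σ1 σ2 p r s : ℝ) {a b : ℝ} (ha : 0 < a) (hb : 0 < b)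
    (hσ1 : 0 ≤ σ1) (hσ2 : 0 ≤ σ2) :
    Gfun n c1 c2 d1 d2 h g (a * σ1) (b * σ2) ρ
        !![a ^ 2 * p, a * b * r; a * b * r, b ^ 2 * s]
      = Gfun n c1 c2 d1 d2 h g σ1 σ2 ρ !![p, r; r, s] := by
  unfold Gfun
  rw [Gnum_scale n c1 c2 d1 d2 h g hh hgm ρ σ1 σ2 p r s ha hb hσ1 hσ2,
    Gdenom_scale n c1 c2 h hh p r s ha hb,
    ENNReal.mul_div_mul_left _ _
      (by
        refine mul_ne_zero ?_ ?_ <;>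
          exact (ENNReal.ofReal_pos.mpr (by positivity)).ne')
      (ENNReal.mul_ne_top ENNReal.ofReal_ne_top ENNReal.ofReal_ne_top)]

end Aux4

section Aux5

variable {n : ℕ}

lemma xbar1_affine (hn : (n : ℝ) ≠ 0) (a b c d : ℝ) (x : Fin n → ℝ × ℝ) :
    xbar1 (fun k => (a * (x k).1 + c, b * (x k).2 + d)) = a * xbar1 x + c := by
  unfold xbar1
  dsimp only
  rw [Finset.sum_add_distrib, ← Finset.mul_sum, Finset.sum_const, Finset.card_univ,
    Fintype.card_fin, nsmul_eq_mul, add_div, mul_div_assoc, mul_div_cancel_left₀ _ hn]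

lemma xbar2_affine (hn : (n : ℝ) ≠ 0) (a b c d : ℝ) (x : Fin n → ℝ × ℝ) :
    xbar2 (fun k => (a * (x k).1 + c, b * (x k).2 + d)) = b * xbar2 x + d := by
  unfold xbar2
  dsimp only
  rw [Finset.sum_add_distrib, ← Finset.mul_sum, Finset.sum_const, Finset.card_univ,
    Fintype.card_fin, nsmul_eq_mul, add_div, mul_div_assoc, mul_div_cancel_left₀ _ hn]

lemma s11_affine (hn : (n : ℝ) ≠ 0) (a b c d : ℝ) (x : Fin n → ℝ × ℝ) :
    s11 (fun k => (a * (x k).1 + c, b * (x k).2 + d)) = a ^ 2 * s11 x := by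
  unfold s11
  rw [xbar1_affine hn a b c d x]
  dsimp only
  rw [Finset.mul_sum]
  exact Finset.sum_congr rfl fun k _ => by unfold xbar1; ring

lemma s22_affine (hn : (n : ℝ) ≠ 0) (a b c d : ℝ) (x : Fin n → ℝ × ℝ) :
    s22 (fun k => (a * (x k).1 + c, b * (x k).2 + d)) = b ^ 2 * s22 x := by
  unfold s22
  rw [xbar2_affine hn a b c d x]
  dsimp only
  rw [Finset.mul_sum]
  exact Finset.sum_congr rfl fun k _ => by unfold xbar2; ring

lemma s12_affine (hn : (n : ℝ) ≠ 0) (a b c d : ℝ) (x : Fin n → ℝ × ℝ) :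
    s12 (fun k => (a * (x k).1 + c, b * (x k).2 + d)) = a * b * s12 x := by
  unfold s12
  rw [xbar1_affine hn a b c d x, xbar2_affine hn a b c d x]
  dsimp only
  rw [Finset.mul_sum]
  exact Finset.sum_congr rfl fun k _ => by unfold xbar1 xbar2; ring

lemma Smat_affine (hn : (n : ℝ) ≠ 0) (a b c d : ℝ) (x : Fin n → ℝ × ℝ) :
    Smat (fun k => (a * (x k).1 + c, b * (x k).2 + d))
      = !![a ^ 2 * s11 x, a * b * s12 x; a * b * s12 x, b ^ 2 * s22 x] := by
  unfold Smat
  rw [s11_affine hn a b c d x, s12_affine hn a b c d x, s22_affine hn a b c d x]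

end Aux5


/-- Theorem 1: the sampling distribution of `G(S, σ1, σ2, ρ)` depends on
`(μ1, μ2, σ1, σ2, ρ)` only through `ρ`; in particular `P(G < 1-α)` is the same
for all `(μ1, μ2, σ1, σ2)`. -/
theorem stmt8 (n : ℕ) (hn : 3 ≤ n) (c1 c2 d1 d2 : ℝ) (h g : ℝ → ℝ)
    (hh : Measurable h) (hgm : Measurable g) (hhpos : ∀ t ∈ Set.Ioo (-1 : ℝ) 1, 0 < h t)
    (ρ : ℝ) (hρ : ρ ∈ Set.Ioo (-1 : ℝ) 1)
    (μ1 μ2 σ1 σ2 : ℝ) (hσ1 : 0 < σ1) (hσ2 : 0 < σ2)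
    (μ1' μ2' σ1' σ2' : ℝ) (hσ1' : 0 < σ1') (hσ2' : 0 < σ2')
    (hD : ∀ᵐ x ∂sampleLaw n μ1 μ2 σ1 σ2 ρ,
      0 < Gdenom n c1 c2 h (Smat x) ∧ Gdenom n c1 c2 h (Smat x) < ⊤)
    (hD' : ∀ᵐ x ∂sampleLaw n μ1' μ2' σ1' σ2' ρ,
      0 < Gdenom n c1 c2 h (Smat x) ∧ Gdenom n c1 c2 h (Smat x) < ⊤) :
    Measure.map (fun x => Gfun n c1 c2 d1 d2 h g σ1 σ2 ρ (Smat x))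
        (sampleLaw n μ1 μ2 σ1 σ2 ρ)
      = Measure.map (fun x => Gfun n c1 c2 d1 d2 h g σ1' σ2' ρ (Smat x))
          (sampleLaw n μ1' μ2' σ1' σ2' ρ) ∧
    ∀ α ∈ Set.Ioo (0 : ℝ) 1,
      sampleLaw n μ1 μ2 σ1 σ2 ρ
          {x | Gfun n c1 c2 d1 d2 h g σ1 σ2 ρ (Smat x) < 1 - α}
        = sampleLaw n μ1' μ2' σ1' σ2' ρ
            {x | Gfun n c1 c2 d1 d2 h g σ1' σ2' ρ (Smat x) < 1 - α} := by

  have hρ2 : 1 - ρ ^ 2 ≠ 0 := by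
    obtain ⟨hl, hr⟩ := hρ
    nlinarith
  have ha : 0 < σ1' / σ1 := div_pos hσ1' hσ1
  have hb : 0 < σ2' / σ2 := div_pos hσ2' hσ2
  have hn0 : (n : ℝ) ≠ 0 := Nat.cast_ne_zero.mpr (by omega)
  have hbiv : Measure.map (fun y : ℝ × ℝ =>
        (σ1' / σ1 * y.1 + (μ1' - σ1' / σ1 * μ1), σ2' / σ2 * y.2 + (μ2' - σ2' / σ2 * μ2)))
      (bivNormal μ1 μ2 σ1 σ2 ρ) = bivNormal μ1' μ2' σ1' σ2' ρ := by
    rw [bivNormal_map_affine μ1 μ2 σ1 σ2 ρ (σ1' / σ1) (σ2' / σ2) _ _ ha hb hσ1.ne' hσ2.ne' hρ2,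
      show σ1' / σ1 * μ1 + (μ1' - σ1' / σ1 * μ1) = μ1' from by ring,
      show σ2' / σ2 * μ2 + (μ2' - σ2' / σ2 * μ2) = μ2' from by ring,
      show σ1' / σ1 * σ1 = σ1' from div_mul_cancel₀ _ hσ1.ne',
      show σ2' / σ2 * σ2 = σ2' from div_mul_cancel₀ _ hσ2.ne']
  haveI hsf : SigmaFinite (bivNormal μ1' μ2' σ1' σ2' ρ) := by
    unfold bivNormal
    infer_instance
  have hT : MeasurePreserving (fun y : ℝ × ℝ =>
        (σ1' / σ1 * y.1 + (μ1' - σ1' / σ1 * μ1), σ2' / σ2 * y.2 + (μ2' - σ2' / σ2 * μ2)))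
      (bivNormal μ1 μ2 σ1 σ2 ρ) (bivNormal μ1' μ2' σ1' σ2' ρ) :=
    ⟨((measurable_fst.const_mul _).add_const _).prodMk
      ((measurable_snd.const_mul _).add_const _), hbiv⟩
  have hTn : MeasurePreserving
      (fun (x : Fin n → ℝ × ℝ) (k : Fin n) =>
        (σ1' / σ1 * (x k).1 + (μ1' - σ1' / σ1 * μ1), σ2' / σ2 * (x k).2 + (μ2' - σ2' / σ2 * μ2)))
      (sampleLaw n μ1 μ2 σ1 σ2 ρ) (sampleLaw n μ1' μ2' σ1' σ2' ρ) := by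
    unfold sampleLaw
    exact measurePreserving_pi _ _ fun _ => hT
  have hkey : ∀ x : Fin n → ℝ × ℝ,
      Gfun n c1 c2 d1 d2 h g σ1' σ2' ρ
        (Smat (fun k =>
          (σ1' / σ1 * (x k).1 + (μ1' - σ1' / σ1 * μ1),
            σ2' / σ2 * (x k).2 + (μ2' - σ2' / σ2 * μ2))))
      = Gfun n c1 c2 d1 d2 h g σ1 σ2 ρ (Smat x) := by
    intro x
    rw [Smat_affine hn0 (σ1' / σ1) (σ2' / σ2) _ _ x]
    have hsc := Gfun_scale n c1 c2 d1 d2 h g hh hgm ρ σ1 σ2 (s11 x) (s12 x) (s22 x)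
      ha hb hσ1.le hσ2.le
    rw [div_mul_cancel₀ _ hσ1.ne', div_mul_cancel₀ _ hσ2.ne'] at hsc
    rw [hsc]
    rfl
  have hGm : Measurable fun x : Fin n → ℝ × ℝ =>
      Gfun n c1 c2 d1 d2 h g σ1 σ2 ρ (Smat x) :=
    measurable_Gfun_Smat n c1 c2 d1 d2 h g σ1 σ2 ρ hh hgm
  have hGm' : Measurable fun x : Fin n → ℝ × ℝ =>
      Gfun n c1 c2 d1 d2 h g σ1' σ2' ρ (Smat x) :=
    measurable_Gfun_Smat n c1 c2 d1 d2 h g σ1' σ2' ρ hh hgm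
  have hmain : Measure.map (fun x => Gfun n c1 c2 d1 d2 h g σ1 σ2 ρ (Smat x))
        (sampleLaw n μ1 μ2 σ1 σ2 ρ)
      = Measure.map (fun x => Gfun n c1 c2 d1 d2 h g σ1' σ2' ρ (Smat x))
          (sampleLaw n μ1' μ2' σ1' σ2' ρ) := by
    conv_rhs => rw [← hTn.map_eq]
    rw [Measure.map_map hGm' hTn.measurable]
    refine congrFun (congrArg Measure.map ?_) _
    funext x
    exact (hkey x).symm
  refine ⟨hmain, fun α hα => ?_⟩
  have e1 : {x : Fin n → ℝ × ℝ | Gfun n c1 c2 d1 d2 h g σ1 σ2 ρ (Smat x) < 1 - α}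
      = (fun x => Gfun n c1 c2 d1 d2 h g σ1 σ2 ρ (Smat x)) ⁻¹' Set.Iio (1 - α) := rfl
  have e2 : {x : Fin n → ℝ × ℝ | Gfun n c1 c2 d1 d2 h g σ1' σ2' ρ (Smat x) < 1 - α}
      = (fun x => Gfun n c1 c2 d1 d2 h g σ1' σ2' ρ (Smat x)) ⁻¹' Set.Iio (1 - α) := rfl
  rw [e1, e2, ← Measure.map_apply hGm measurableSet_Iio,
    ← Measure.map_apply hGm' measurableSet_Iio, hmain]

end
end

section
/- Let n ≥ 3 and a, b be reals with n − a > 0, n − b > 0. Let Z, X₁, X₂ and Z*, X_a*, X_b* be independent random variables with Z, Z* standard normal, X₁ chi-squared with n−1 degrees of freedom, X₂ chi-squared with n−2 degrees of freedom, X_a* chi-squared with n−a degrees of freedom, and X_b* chi-squared with n−b degrees of freedom. Then the identity P( (√(1−ρ²) Z + ρ√(X₁))/√(X₂) > q_α(ρ) ) = 1 − α, where q_α(ρ) denotes the α-quantile of (√(1−ρ²) Z* + ρ√(X_a*))/√(X_b*), holds for every α ∈ (0,1) and every ρ ∈ (−1,1) if and only if (a, b) = (1, 2). -/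
open MeasureTheory ProbabilityTheory

noncomputable section

namespace S10

open Real Set Filter Topology
open scoped ENNReal NNReal

/-! ### Basic facts about the Gaussian and chi-squared measures -/

lemma chiSq_isProb {ν : ℝ} (hν : 0 < ν) : IsProbabilityMeasure (chiSq ν) :=
  isProbabilityMeasure_gammaMeasure (by linarith) (by norm_num)

lemma gauss_eq : gaussianReal 0 1 = volume.withDensity (gaussianPDF 0 1) :=
  gaussianReal_of_var_ne_zero 0 one_ne_zero

lemma gauss_null {s : Set ℝ} (hs : volume s = 0) : gaussianReal 0 1 s = 0 := by
  rw [gauss_eq]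
  exact withDensity_absolutelyContinuous _ _ hs

lemma gauss_singleton (c : ℝ) : gaussianReal 0 1 {c} = 0 :=
  gauss_null (by simp)

lemma gauss_pos {s : Set ℝ} (hs : MeasurableSet s) (h : 0 < volume s) :
    0 < gaussianReal 0 1 s := by
  rw [gauss_eq, withDensity_apply _ hs]
  rw [pos_iff_ne_zero]
  intro h0
  rw [lintegral_eq_zero_iff (measurable_gaussianPDF 0 1)] at h0
  have : ∀ᵐ x ∂(volume.restrict s), False := by
    filter_upwards [h0] with x hx
    exact absurd hx (gaussianPDF_pos 0 one_ne_zero x).ne'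
  rw [ae_iff] at this
  simp only [not_false_iff, setOf_true] at this
  rw [Measure.restrict_apply_univ] at this
  exact absurd this h.ne'

lemma chiSq_Iic_zero {ν : ℝ} : chiSq ν (Iic 0) = 0 := by
  have h1 : chiSq ν (Iio 0) = 0 := by
    rw [chiSq, gammaMeasure, withDensity_apply _ measurableSet_Iio]
    exact lintegral_gammaPDF_of_nonpos le_rfl
  have h2 : chiSq ν {(0:ℝ)} = 0 := by
    rw [chiSq, gammaMeasure]
    exact withDensity_absolutelyContinuous _ _ (by simp)
  have : Iic (0:ℝ) = Iio 0 ∪ {0} := by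
    ext x; simp [le_iff_lt_or_eq]
  rw [this]
  exact le_antisymm ((measure_union_le _ _).trans (by rw [h1, h2]; simp)) (zero_le)

/-! ### The map and the joint measures -/

/-- the map defining the statistic -/
def gmap (ρ : ℝ) : ℝ × ℝ × ℝ → ℝ :=
  fun q => (Real.sqrt (1 - ρ ^ 2) * q.1 + ρ * Real.sqrt q.2.1) / Real.sqrt q.2.2

lemma measurable_gmap (ρ : ℝ) : Measurable (gmap ρ) := by
  unfold gmap
  fun_prop

def κ (ν₁ ν₂ : ℝ) : Measure (ℝ × ℝ) := (chiSq ν₁).prod (chiSq ν₂)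

def jm (ν₁ ν₂ : ℝ) : Measure (ℝ × ℝ × ℝ) := (gaussianReal 0 1).prod (κ ν₁ ν₂)

def law (ρ ν₁ ν₂ : ℝ) : Measure ℝ := Measure.map (gmap ρ) (jm ν₁ ν₂)

instance chiSq_sfinite (ν : ℝ) : SFinite (chiSq ν) := by
  unfold chiSq gammaMeasure; infer_instance

instance κ_sfinite (ν₁ ν₂ : ℝ) : SFinite (κ ν₁ ν₂) := by unfold κ; infer_instance

lemma κ_isProb {ν₁ ν₂ : ℝ} (h1 : 0 < ν₁) (h2 : 0 < ν₂) : IsProbabilityMeasure (κ ν₁ ν₂) := by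
  have := chiSq_isProb h1; have := chiSq_isProb h2
  unfold κ; infer_instance

lemma jm_isProb {ν₁ ν₂ : ℝ} (h1 : 0 < ν₁) (h2 : 0 < ν₂) : IsProbabilityMeasure (jm ν₁ ν₂) := by
  have := κ_isProb h1 h2
  unfold jm; infer_instance

lemma law_isProb {ρ ν₁ ν₂ : ℝ} (h1 : 0 < ν₁) (h2 : 0 < ν₂) :
    IsProbabilityMeasure (law ρ ν₁ ν₂) := by
  have := jm_isProb (ν₁ := ν₁) (ν₂ := ν₂) h1 h2
  exact Measure.isProbabilityMeasure_map (measurable_gmap ρ).aemeasurable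

lemma law_apply {ρ ν₁ ν₂ : ℝ} {B : Set ℝ} (hB : MeasurableSet B) :
    law ρ ν₁ ν₂ B = ∫⁻ y, gaussianReal 0 1 {z | gmap ρ (z, y) ∈ B} ∂(κ ν₁ ν₂) := by
  rw [law, Measure.map_apply (measurable_gmap ρ) hB, jm,
    Measure.prod_apply_symm ((measurable_gmap ρ) hB)]
  rfl

lemma κ_ae_pos {ν₁ ν₂ : ℝ} (h1 : 0 < ν₁) (h2 : 0 < ν₂) :
    ∀ᵐ x ∂(κ ν₁ ν₂), 0 < x.1 ∧ 0 < x.2 := by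
  have := chiSq_isProb h1; have := chiSq_isProb h2
  have hA : κ ν₁ ν₂ {x : ℝ × ℝ | ¬ (0 < x.1)} = 0 := by
    have : {x : ℝ × ℝ | ¬ (0 < x.1)} = (Iic 0) ×ˢ (univ : Set ℝ) := by
      ext x; simp [not_lt]
    rw [this, κ, Measure.prod_prod, chiSq_Iic_zero, zero_mul]
  have hB : κ ν₁ ν₂ {x : ℝ × ℝ | ¬ (0 < x.2)} = 0 := by
    have : {x : ℝ × ℝ | ¬ (0 < x.2)} = (univ : Set ℝ) ×ˢ (Iic 0) := by
      ext x; simp [not_lt]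
    rw [this, κ, Measure.prod_prod, chiSq_Iic_zero, mul_zero]
  have h1' : ∀ᵐ x ∂(κ ν₁ ν₂), 0 < x.1 := by
    rw [ae_iff]; exact hA
  have h2' : ∀ᵐ x ∂(κ ν₁ ν₂), 0 < x.2 := by
    rw [ae_iff]; exact hB
  filter_upwards [h1', h2'] with x hx1 hx2 using ⟨hx1, hx2⟩

/-! ### Slices of the law -/

/-- slice endpoint -/
def ep (ρ t : ℝ) (x : ℝ × ℝ) : ℝ :=
  (t * Real.sqrt x.2 - ρ * Real.sqrt x.1) / Real.sqrt (1 - ρ ^ 2)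

lemma sqrt_s_pos {ρ : ℝ} (hρ : ρ ^ 2 < 1) : 0 < Real.sqrt (1 - ρ ^ 2) :=
  Real.sqrt_pos.mpr (by linarith)

lemma slice_Iic {ρ t : ℝ} (hρ : ρ ^ 2 < 1) {x : ℝ × ℝ} (hx2 : 0 < x.2) :
    {z : ℝ | gmap ρ (z, x) ≤ t} = Iic (ep ρ t x) := by
  have hs := sqrt_s_pos hρ
  have hw : 0 < Real.sqrt x.2 := Real.sqrt_pos.mpr hx2
  ext z
  simp only [gmap, mem_setOf_eq, mem_Iic, ep]
  rw [div_le_iff₀ hw, le_div_iff₀ hs]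
  constructor <;> intro h <;> nlinarith

lemma slice_lt {ρ t : ℝ} (hρ : ρ ^ 2 < 1) {x : ℝ × ℝ} (hx2 : 0 < x.2) :
    {z : ℝ | t < gmap ρ (z, x)} = Ioi (ep ρ t x) := by
  have h := slice_Iic (t := t) hρ hx2
  ext z
  have : (t < gmap ρ (z, x)) ↔ ¬ (gmap ρ (z, x) ≤ t) := by simp
  rw [mem_setOf_eq, this]
  have hz : (gmap ρ (z, x) ≤ t) ↔ z ∈ Iic (ep ρ t x) := by
    rw [← h]; rfl
  rw [hz]
  simp

lemma slice_eq {ρ c : ℝ} (hρ : ρ ^ 2 < 1) {x : ℝ × ℝ} (hx2 : 0 < x.2) :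
    {z : ℝ | gmap ρ (z, x) = c} = {ep ρ c x} := by
  have hs := sqrt_s_pos hρ
  have hw : 0 < Real.sqrt x.2 := Real.sqrt_pos.mpr hx2
  ext z
  simp only [gmap, mem_setOf_eq, mem_singleton_iff, ep]
  rw [div_eq_iff hw.ne']
  constructor <;> intro h
  · rw [eq_div_iff hs.ne']; nlinarith
  · rw [eq_div_iff hs.ne'] at h; nlinarith

lemma measurable_slice {ρ : ℝ} {B : Set ℝ} (hB : MeasurableSet B) :
    Measurable (fun x : ℝ × ℝ => gaussianReal 0 1 {z | gmap ρ (z, x) ∈ B}) := by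
  have h := measurable_measure_prodMk_right (μ := gaussianReal 0 1)
    (β := ℝ × ℝ) ((measurable_gmap ρ) hB)
  convert h using 2
  rfl

lemma measurableSet_posQuadrant :
    MeasurableSet {x : ℝ × ℝ | 0 < x.1 ∧ 0 < x.2} := by
  have : {x : ℝ × ℝ | 0 < x.1 ∧ 0 < x.2} = (Ioi 0) ×ˢ (Ioi 0) := by
    ext x; simp [Set.mem_prod]
  rw [this]; exact measurableSet_Ioi.prod measurableSet_Ioi

lemma κ_pos_set_one {ν₁ ν₂ : ℝ} (h1 : 0 < ν₁) (h2 : 0 < ν₂) :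
    κ ν₁ ν₂ {x : ℝ × ℝ | 0 < x.1 ∧ 0 < x.2} = 1 := by
  have := κ_isProb h1 h2
  rw [← prob_compl_eq_zero_iff measurableSet_posQuadrant]
  have : {x : ℝ × ℝ | 0 < x.1 ∧ 0 < x.2}ᶜ = {x : ℝ × ℝ | ¬ (0 < x.1 ∧ 0 < x.2)} := by
    ext x; simp [not_and_or]
  rw [this, ← ae_iff]
  exact κ_ae_pos h1 h2

lemma law_atomless {ρ ν₁ ν₂ : ℝ} (hρ : ρ ^ 2 < 1) (h1 : 0 < ν₁) (h2 : 0 < ν₂) (c : ℝ) :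
    law ρ ν₁ ν₂ {c} = 0 := by
  rw [law_apply (measurableSet_singleton c)]
  rw [← lintegral_zero (μ := κ ν₁ ν₂)]
  apply lintegral_congr_ae
  filter_upwards [κ_ae_pos h1 h2] with x hx
  have : {z : ℝ | gmap ρ (z, x) ∈ ({c} : Set ℝ)} = {ep ρ c x} := by
    rw [← slice_eq hρ hx.2]; rfl
  rw [this, gauss_singleton]

lemma law_Iic_pos {ρ ν₁ ν₂ : ℝ} (hρ : ρ ^ 2 < 1) (h1 : 0 < ν₁) (h2 : 0 < ν₂) (t : ℝ) :
    0 < law ρ ν₁ ν₂ (Iic t) := by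
  have := κ_isProb h1 h2
  rw [law_apply measurableSet_Iic]
  rw [lintegral_pos_iff_support (measurable_slice measurableSet_Iic)]
  have hsub : {x : ℝ × ℝ | 0 < x.1 ∧ 0 < x.2} ⊆
      Function.support (fun x : ℝ × ℝ => gaussianReal 0 1 {z | gmap ρ (z, x) ∈ Iic t}) := by
    intro x hx
    have : {z : ℝ | gmap ρ (z, x) ∈ Iic t} = Iic (ep ρ t x) := slice_Iic hρ hx.2
    simp only [Function.mem_support, this]
    exact (gauss_pos measurableSet_Iic (by simp)).ne'
  refine lt_of_lt_of_le ?_ (measure_mono hsub)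
  rw [κ_pos_set_one h1 h2]
  norm_num

lemma law_Ioi_pos {ρ ν₁ ν₂ : ℝ} (hρ : ρ ^ 2 < 1) (h1 : 0 < ν₁) (h2 : 0 < ν₂) (t : ℝ) :
    0 < law ρ ν₁ ν₂ (Ioi t) := by
  have := κ_isProb h1 h2
  rw [law_apply measurableSet_Ioi]
  rw [lintegral_pos_iff_support (measurable_slice measurableSet_Ioi)]
  have hsub : {x : ℝ × ℝ | 0 < x.1 ∧ 0 < x.2} ⊆
      Function.support (fun x : ℝ × ℝ => gaussianReal 0 1 {z | gmap ρ (z, x) ∈ Ioi t}) := by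
    intro x hx
    have : {z : ℝ | gmap ρ (z, x) ∈ Ioi t} = Ioi (ep ρ t x) := slice_lt hρ hx.2
    simp only [Function.mem_support, this]
    exact (gauss_pos measurableSet_Ioi (by simp)).ne'
  refine lt_of_lt_of_le ?_ (measure_mono hsub)
  rw [κ_pos_set_one h1 h2]; norm_num

lemma ep_lt_ep {ρ u v : ℝ} (hρ : ρ ^ 2 < 1) (huv : u < v) {x : ℝ × ℝ} (hx2 : 0 < x.2) :
    ep ρ u x < ep ρ v x := by
  have hs := sqrt_s_pos hρ
  have hw : 0 < Real.sqrt x.2 := Real.sqrt_pos.mpr hx2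
  unfold ep
  apply div_lt_div_of_pos_right ?_ hs
  nlinarith [Real.sqrt_nonneg x.1]

lemma law_Ioc_pos {ρ ν₁ ν₂ : ℝ} (hρ : ρ ^ 2 < 1) (h1 : 0 < ν₁) (h2 : 0 < ν₂)
    {u v : ℝ} (huv : u < v) : 0 < law ρ ν₁ ν₂ (Ioc u v) := by
  have := κ_isProb h1 h2
  rw [law_apply measurableSet_Ioc]
  rw [lintegral_pos_iff_support (measurable_slice measurableSet_Ioc)]
  have hsub : {x : ℝ × ℝ | 0 < x.1 ∧ 0 < x.2} ⊆
      Function.support (fun x : ℝ × ℝ => gaussianReal 0 1 {z | gmap ρ (z, x) ∈ Ioc u v}) := by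
    intro x hx
    have hioc : {z : ℝ | gmap ρ (z, x) ∈ Ioc u v} = Ioc (ep ρ u x) (ep ρ v x) := by
      ext z
      simp only [mem_setOf_eq, mem_Ioc]
      constructor
      · rintro ⟨h1', h2'⟩
        refine ⟨?_, ?_⟩
        · have := slice_lt (t := u) hρ hx.2
          have hz : z ∈ {z : ℝ | u < gmap ρ (z, x)} := h1'
          rw [this] at hz; exact hz
        · have := slice_Iic (t := v) hρ hx.2
          have hz : z ∈ {z : ℝ | gmap ρ (z, x) ≤ v} := h2'
          rw [this] at hz; exact hz
      · rintro ⟨h1', h2'⟩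
        constructor
        · have := slice_lt (t := u) hρ hx.2
          have : z ∈ {z : ℝ | u < gmap ρ (z, x)} := by rw [this]; exact h1'
          exact this
        · have := slice_Iic (t := v) hρ hx.2
          have : z ∈ {z : ℝ | gmap ρ (z, x) ≤ v} := by rw [this]; exact h2'
          exact this
    simp only [Function.mem_support, hioc]
    refine (gauss_pos measurableSet_Ioc ?_).ne'
    rw [Real.volume_Ioc]
    simp only [ENNReal.ofReal_pos, sub_pos]
    exact ep_lt_ep hρ huv hx.2
  refine lt_of_lt_of_le ?_ (measure_mono hsub)
  rw [κ_pos_set_one h1 h2]; norm_num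

/-! ### Quantile lemmas -/

section Quantile

variable {μ : Measure ℝ} [IsProbabilityMeasure μ] {α : ℝ}

lemma qset_eq : {y : ℝ | α ≤ (μ (Set.Iic y)).toReal} = {y : ℝ | α ≤ cdf μ y} := by
  ext y; simp [cdf_eq_real, measureReal_def]

lemma qset_nonempty (hα : α < 1) : {y : ℝ | α ≤ (μ (Set.Iic y)).toReal}.Nonempty := by
  rw [qset_eq]
  obtain ⟨y, hy⟩ := ((tendsto_cdf_atTop μ).eventually (eventually_ge_nhds hα)).exists
  exact ⟨y, hy⟩

lemma qset_bddBelow (hα : 0 < α) : BddBelow {y : ℝ | α ≤ (μ (Set.Iic y)).toReal} := by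
  rw [qset_eq]
  obtain ⟨y₀, hy₀⟩ := (eventually_atBot.mp
    ((tendsto_cdf_atBot μ).eventually (eventually_lt_nhds hα)))
  refine ⟨y₀, fun y hy => ?_⟩
  by_contra h
  push_neg at h
  exact absurd hy (not_le.mpr (hy₀ y h.le))

lemma cdf_quantile_ge (hα : α ∈ Set.Ioo 0 1) : α ≤ cdf μ (mQuantile μ α) := by
  set q := mQuantile μ α with hq
  have hne := qset_nonempty (μ := μ) hα.2
  have hbdd := qset_bddBelow (μ := μ) hα.1
  have hmem : ∀ y ∈ Set.Ioi q, α ≤ cdf μ y := by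
    intro y hy
    obtain ⟨s, hs, hsy⟩ := (csInf_lt_iff hbdd hne).mp hy
    rw [qset_eq] at hs
    exact le_trans hs ((monotone_cdf (μ := μ)) hsy.le)
  have hrc : Filter.Tendsto (cdf μ) (nhdsWithin q (Set.Ioi q)) (nhds (cdf μ q)) :=
    ((cdf μ).right_continuous q).mono_left (nhdsWithin_mono q Set.Ioi_subset_Ici_self)
  refine ge_of_tendsto hrc ?_
  filter_upwards [eventually_mem_nhdsWithin] with y hy using hmem y hy

lemma quantile_le_iff (hα : α ∈ Set.Ioo 0 1) {t : ℝ} :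
    mQuantile μ α ≤ t ↔ α ≤ (μ (Set.Iic t)).toReal := by
  constructor
  · intro h
    rw [← measureReal_def, ← cdf_eq_real]
    exact le_trans (cdf_quantile_ge hα) ((monotone_cdf (μ := μ)) h)
  · intro h
    exact csInf_le (qset_bddBelow hα.1) h

lemma cdf_quantile_eq (hα : α ∈ Set.Ioo 0 1) (hatom : μ {mQuantile μ α} = 0) :
    (μ (Set.Iic (mQuantile μ α))).toReal = α := by
  set q := mQuantile μ α with hq
  rw [← measureReal_def, ← cdf_eq_real]
  refine le_antisymm ?_ (cdf_quantile_ge hα)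
  by_contra h
  push_neg at h
  have hIio : μ (Set.Iio q) = μ (Set.Iic q) := by
    have : Set.Iic q = Set.Iio q ∪ {q} := by
      ext y; simp [le_iff_lt_or_eq]
    rw [this, measure_union (by simp) (measurableSet_singleton q), hatom, add_zero]
  have hlt : ENNReal.ofReal α < μ (Set.Iio q) := by
    rw [hIio]
    have : ENNReal.ofReal α < ENNReal.ofReal (cdf μ q) :=
      ENNReal.ofReal_lt_ofReal_iff_of_nonneg hα.1.le |>.mpr h
    rwa [ofReal_cdf] at this
  have hunion : Set.Iio q = ⋃ n : ℕ, Set.Iic (q - 1/(n+1)) := by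
    ext y
    simp only [Set.mem_Iio, Set.mem_iUnion, Set.mem_Iic]
    constructor
    · intro hy
      obtain ⟨n, hn⟩ := exists_nat_one_div_lt (sub_pos.mpr hy)
      exact ⟨n, by linarith⟩
    · rintro ⟨n, hn⟩
      have : (0:ℝ) < 1/(n+1) := by positivity
      linarith
  have hmono : Monotone (fun n : ℕ => Set.Iic (q - 1/(n+1))) := by
    intro m n hmn
    apply Set.Iic_subset_Iic.mpr
    have : (1:ℝ)/(n+1) ≤ 1/(m+1) := by
      apply one_div_le_one_div_of_le (by positivity)
      exact_mod_cast by omega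
    linarith
  have htd : Filter.Tendsto (fun n : ℕ => μ (Set.Iic (q - 1/(n+1)))) Filter.atTop
      (nhds (μ (Set.Iio q))) := by
    rw [hunion]
    exact tendsto_measure_iUnion_atTop hmono
  obtain ⟨n, hn⟩ := (htd.eventually (eventually_gt_nhds hlt)).exists
  have : α ≤ (μ (Set.Iic (q - 1/(n+1)))).toReal := by
    have := hn.le
    have hfin : μ (Set.Iic (q - 1/(n+1))) ≠ ⊤ := measure_ne_top μ _
    calc α = (ENNReal.ofReal α).toReal := by rw [ENNReal.toReal_ofReal hα.1.le]
    _ ≤ _ := ENNReal.toReal_mono hfin this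
  have hle : q ≤ q - 1/(n+1) := csInf_le (qset_bddBelow hα.1) this
  have : (0:ℝ) < 1/(n+1) := by positivity
  linarith

end Quantile

/-! ### Marginalization -/

lemma measurable_gaussIic : Measurable (fun r : ℝ => gaussianReal 0 1 (Iic r)) :=
  Monotone.measurable (fun _ _ h => measure_mono (Iic_subset_Iic.mpr h))

/-- the 1-d functional -/
def uf (ν c : ℝ) : ℝ≥0∞ := ∫⁻ x, gaussianReal 0 1 (Iic (-c * Real.sqrt x)) ∂(chiSq ν)

lemma marg_fst {ν₁ ν₂ : ℝ} (h2 : 0 < ν₂) {g : ℝ → ℝ≥0∞} (hg : Measurable g) :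
    ∫⁻ x, g x.1 ∂(κ ν₁ ν₂) = ∫⁻ x, g x ∂(chiSq ν₁) := by
  have := chiSq_isProb h2
  have hfst : (κ ν₁ ν₂).fst = chiSq ν₁ := Measure.fst_prod
  rw [← hfst, Measure.fst, lintegral_map hg measurable_fst]

lemma marg_snd {ν₁ ν₂ : ℝ} (h1 : 0 < ν₁) {g : ℝ → ℝ≥0∞} (hg : Measurable g) :
    ∫⁻ x, g x.2 ∂(κ ν₁ ν₂) = ∫⁻ x, g x ∂(chiSq ν₂) := by
  have := chiSq_isProb h1
  have hsnd : (κ ν₁ ν₂).snd = chiSq ν₂ := Measure.snd_prod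
  rw [← hsnd, Measure.snd, lintegral_map hg measurable_snd]

lemma law_Iic_zero_eq {ρ ν₁ ν₂ : ℝ} (hρ : ρ ^ 2 < 1) (h1 : 0 < ν₁) (h2 : 0 < ν₂) :
    law ρ ν₁ ν₂ (Iic 0) = uf ν₁ (ρ / Real.sqrt (1 - ρ ^ 2)) := by
  set c := ρ / Real.sqrt (1 - ρ ^ 2) with hc
  have hs : 0 < Real.sqrt (1 - ρ ^ 2) := Real.sqrt_pos.mpr (by linarith)
  rw [law_apply measurableSet_Iic]
  have step : ∫⁻ y, gaussianReal 0 1 {z | gmap ρ (z, y) ∈ Iic 0} ∂(κ ν₁ ν₂)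
      = ∫⁻ x, (fun r => gaussianReal 0 1 (Iic (-c * Real.sqrt r))) x.1 ∂(κ ν₁ ν₂) := by
    apply lintegral_congr_ae
    filter_upwards [κ_ae_pos h1 h2] with x hx
    have h1' : {z : ℝ | gmap ρ (z, x) ∈ Iic 0} = Iic (ep ρ 0 x) := slice_Iic hρ hx.2
    have h2' : ep ρ 0 x = -c * Real.sqrt x.1 := by
      unfold ep
      rw [hc]
      field_simp
      ring
    rw [h1', h2']
  rw [step, marg_fst h2 (g := fun r => gaussianReal 0 1 (Iic (-c * Real.sqrt r)))
    (measurable_gaussIic.comp (by fun_prop))]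
  rfl

lemma law_Iic_neg_eq {ν₁ ν₂ : ℝ} (h1 : 0 < ν₁) (h2 : 0 < ν₂) (c : ℝ) :
    law 0 ν₁ ν₂ (Iic (-c)) = uf ν₂ c := by
  rw [law_apply measurableSet_Iic]
  have step : ∫⁻ y, gaussianReal 0 1 {z | gmap 0 (z, y) ∈ Iic (-c)} ∂(κ ν₁ ν₂)
      = ∫⁻ x, (fun r => gaussianReal 0 1 (Iic (-c * Real.sqrt r))) x.2 ∂(κ ν₁ ν₂) := by
    apply lintegral_congr_ae
    filter_upwards [κ_ae_pos h1 h2] with x hx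
    have h0 : (0:ℝ) ^ 2 < 1 := by norm_num
    have h1' : {z : ℝ | gmap 0 (z, x) ∈ Iic (-c)} = Iic (ep 0 (-c) x) := slice_Iic h0 hx.2
    have h2' : ep 0 (-c) x = -c * Real.sqrt x.2 := by
      unfold ep
      norm_num
    rw [h1', h2']
  rw [step, marg_snd h1 (g := fun r => gaussianReal 0 1 (Iic (-c * Real.sqrt r)))
    (measurable_gaussIic.comp (by fun_prop))]
  rfl

/-! ### Computation of the 1-d functional -/

lemma phi_even (z : ℝ) : gaussianPDFReal 0 1 (-z) = gaussianPDFReal 0 1 z := by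
  simp [gaussianPDFReal, neg_sq]

lemma tail_substitution {x : ℝ} (hx : 0 < x) (c : ℝ) :
    ∫ z in Iic (-c * Real.sqrt x), gaussianPDFReal 0 1 z
      = ∫ t in Ioi c, Real.sqrt x * gaussianPDFReal 0 1 (Real.sqrt x * t) := by
  have hsx : 0 < Real.sqrt x := Real.sqrt_pos.mpr hx
  have h1 : ∫ z in Iic (-c * Real.sqrt x), gaussianPDFReal 0 1 z
      = ∫ z in Ioi (c * Real.sqrt x), gaussianPDFReal 0 1 z := by
    rw [neg_mul, show (∫ z in Iic (-(c * Real.sqrt x)), gaussianPDFReal 0 1 z)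
      = ∫ z in Iic (-(c * Real.sqrt x)), gaussianPDFReal 0 1 (-z) from
        setIntegral_congr_fun measurableSet_Iic (fun z _ => (phi_even z).symm),
      integral_comp_neg_Iic, neg_neg]
  have h2 : ∫ t in Ioi c, gaussianPDFReal 0 1 (Real.sqrt x * t)
      = (Real.sqrt x)⁻¹ • ∫ z in Ioi (Real.sqrt x * c), gaussianPDFReal 0 1 z :=
    integral_comp_mul_left_Ioi (gaussianPDFReal 0 1) c hsx
  rw [h1]
  calc ∫ z in Ioi (c * Real.sqrt x), gaussianPDFReal 0 1 z
      = Real.sqrt x • ((Real.sqrt x)⁻¹ • ∫ z in Ioi (Real.sqrt x * c), gaussianPDFReal 0 1 z) := by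
        rw [smul_smul, mul_inv_cancel₀ hsx.ne', one_smul, mul_comm]
    _ = Real.sqrt x • ∫ t in Ioi c, gaussianPDFReal 0 1 (Real.sqrt x * t) := by rw [h2]
    _ = ∫ t in Ioi c, Real.sqrt x * gaussianPDFReal 0 1 (Real.sqrt x * t) := by
        rw [← integral_smul]; simp [smul_eq_mul]

lemma gauss_tail {x : ℝ} (hx : 0 < x) (c : ℝ) :
    gaussianReal 0 1 (Iic (-c * Real.sqrt x))
      = ∫⁻ t in Ioi c, ENNReal.ofReal (Real.sqrt x * gaussianPDFReal 0 1 (Real.sqrt x * t)) := by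
  rw [gaussianReal_apply_eq_integral 0 one_ne_zero, tail_substitution hx c,
    ofReal_integral_eq_lintegral_ofReal]
  · exact (((integrable_gaussianPDFReal 0 1).comp_mul_left' (Real.sqrt_pos.mpr hx).ne').const_mul
      _).restrict
  · exact ae_of_all _ (fun t => mul_nonneg (Real.sqrt_nonneg x) (gaussianPDFReal_nonneg 0 1 _))

/-- the t-type density kernel -/
def gk (ν t : ℝ) : ℝ :=
  (1/2:ℝ) ^ (ν/2) / Real.Gamma (ν/2) * (Real.sqrt (2*π))⁻¹ *
    ((1 / ((1+t^2)/2)) ^ (ν/2 + 1/2) * Real.Gamma (ν/2 + 1/2))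

lemma pdf_prod_eq {ν x t : ℝ} (hx : 0 < x) :
    gammaPDFReal (ν/2) (1/2) x * (Real.sqrt x * gaussianPDFReal 0 1 (Real.sqrt x * t))
      = ((1/2:ℝ) ^ (ν/2) / Real.Gamma (ν/2) * (Real.sqrt (2*π))⁻¹) *
        (x ^ (ν/2 + 1/2 - 1) * Real.exp (-((1+t^2)/2 * x))) := by
  rw [gammaPDFReal, if_pos hx.le, gaussianPDFReal]
  rw [show ((Real.sqrt x * t - 0)^2 = t^2*x) from by
    rw [sub_zero, mul_pow, Real.sq_sqrt hx.le]; ring]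
  rw [show (x ^ (ν/2 + 1/2 - 1) = x ^ (ν/2 - 1) * x ^ (1/2:ℝ)) from by
    rw [← Real.rpow_add hx]; ring_nf]
  rw [← Real.sqrt_eq_rpow]
  rw [show Real.exp (-((1+t^2)/2 * x))
      = Real.exp (-(1/2*x)) * Real.exp (-(t^2*x) / (2*(1:ℝ≥0))) from by
    rw [← Real.exp_add]; norm_num; ring_nf]
  have : Real.sqrt (2*π*((1:ℝ≥0):ℝ)) = Real.sqrt (2*π) := by norm_num
  rw [this]
  ring

lemma integrableOn_kernel {p b : ℝ} (hp : 0 < p) (hb : 0 < b) :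
    IntegrableOn (fun x : ℝ => x ^ (p - 1) * Real.exp (-(b * x))) (Ioi 0) := by
  have h := integrableOn_rpow_mul_exp_neg_mul_rpow (p := 1) (s := p - 1) (b := b)
    (by linarith) zero_lt_one hb
  refine h.congr_fun (fun x hx => ?_) measurableSet_Ioi
  simp only [Real.rpow_one, neg_mul]

lemma uf_eq {ν : ℝ} (hν : 0 < ν) (c : ℝ) :
    uf ν c = ∫⁻ t in Ioi c, ENNReal.ofReal (gk ν t) := by
  have ha : 0 < ν / 2 := by linarith
  have hp : 0 < ν / 2 + 1/2 := by linarith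
  set A : ℝ := (1/2:ℝ) ^ (ν/2) / Real.Gamma (ν/2) * (Real.sqrt (2*π))⁻¹ with hA
  have hA0 : 0 ≤ A := by
    rw [hA]; positivity
  have hwd := lintegral_withDensity_eq_lintegral_mul volume (f := gammaPDF (ν/2) (1/2))
    ((measurable_gammaPDFReal _ _).ennreal_ofReal)
    (g := fun x => gaussianReal 0 1 (Iic (-c * Real.sqrt x)))
    (measurable_gaussIic.comp (by fun_prop))
  rw [uf, chiSq, gammaMeasure, hwd]
  have hsplit := (lintegral_add_compl
    (fun x => (gammaPDF (ν/2) (1/2) * fun x => gaussianReal 0 1 (Iic (-c * Real.sqrt x))) x)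
    (measurableSet_Ioi (a := (0:ℝ))) (μ := volume))
  rw [compl_Ioi] at hsplit
  rw [← hsplit]
  have hzero : ∫⁻ x in Iic 0,
      (gammaPDF (ν/2) (1/2) * fun x => gaussianReal 0 1 (Iic (-c * Real.sqrt x))) x = 0 := by
    rw [← setLIntegral_congr Iio_ae_eq_Iic]
    have hz : ∀ x ∈ Iio (0:ℝ),
        (gammaPDF (ν/2) (1/2) * fun x => gaussianReal 0 1 (Iic (-c * Real.sqrt x))) x = 0 := by
      intro x hx
      simp [Pi.mul_apply, gammaPDF_of_neg hx]
    rw [setLIntegral_congr_fun_ae measurableSet_Iio (ae_of_all _ hz), lintegral_zero]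
  rw [hzero, add_zero]
  have hstep3 : ∫⁻ x in Ioi 0,
      (gammaPDF (ν/2) (1/2) * fun x => gaussianReal 0 1 (Iic (-c * Real.sqrt x))) x
      = ∫⁻ x in Ioi 0, ∫⁻ t in Ioi c,
          ENNReal.ofReal (gammaPDFReal (ν/2) (1/2) x *
            (Real.sqrt x * gaussianPDFReal 0 1 (Real.sqrt x * t))) := by
    refine setLIntegral_congr_fun_ae measurableSet_Ioi (ae_of_all _ (fun x hx => ?_))
    simp only [Pi.mul_apply]
    rw [gauss_tail hx c, gammaPDF, ← lintegral_const_mul' _ _ ENNReal.ofReal_ne_top]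
    congr 1
    ext t
    rw [← ENNReal.ofReal_mul (gammaPDFReal_nonneg ha (by norm_num) x)]
  rw [hstep3]
  rw [lintegral_lintegral_swap]
  swap
  · apply Measurable.aemeasurable
    apply Measurable.ennreal_ofReal
    have m1 : Measurable fun q : ℝ × ℝ => gammaPDFReal (ν/2) (1/2) q.1 :=
      (measurable_gammaPDFReal _ _).comp measurable_fst
    have m2 : Measurable fun q : ℝ × ℝ => Real.sqrt q.1 :=
      continuous_sqrt.measurable.comp measurable_fst
    have m3 : Measurable fun q : ℝ × ℝ => gaussianPDFReal 0 1 (Real.sqrt q.1 * q.2) :=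
      (measurable_gaussianPDFReal 0 1).comp (m2.mul measurable_snd)
    exact m1.mul (m2.mul m3)
  refine setLIntegral_congr_fun_ae measurableSet_Ioi (ae_of_all _ (fun t _ => ?_))
  have hrt : 0 < (1 + t^2)/2 := by positivity
  have hinner : ∫⁻ x in Ioi 0, ENNReal.ofReal (gammaPDFReal (ν/2) (1/2) x *
      (Real.sqrt x * gaussianPDFReal 0 1 (Real.sqrt x * t)))
      = ∫⁻ x in Ioi 0, ENNReal.ofReal
          (A * (x ^ (ν/2 + 1/2 - 1) * Real.exp (-((1+t^2)/2 * x)))) := by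
    refine setLIntegral_congr_fun_ae measurableSet_Ioi (ae_of_all _ (fun x hx => ?_))
    rw [pdf_prod_eq hx, hA]
  rw [hinner, ← ofReal_integral_eq_lintegral_ofReal]
  · rw [integral_const_mul, integral_rpow_mul_exp_neg_mul_Ioi hp hrt, gk]
  · exact ((integrableOn_kernel hp hrt).const_mul A)
  · refine (ae_restrict_iff' measurableSet_Ioi).mpr (ae_of_all _ (fun x hx => ?_))
    have : (0:ℝ) ≤ x ^ (ν/2 + 1/2 - 1) := Real.rpow_nonneg (le_of_lt hx) _
    positivity

/-! ### Injectivity of the 1-d functional -/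

lemma gk_pos {ν : ℝ} (hν : 0 < ν) (t : ℝ) : 0 < gk ν t := by
  unfold gk
  have h1 := Real.Gamma_pos_of_pos (show 0 < ν/2 by linarith)
  have h2 := Real.Gamma_pos_of_pos (show 0 < ν/2 + 1/2 by linarith)
  have hb : (0:ℝ) < 1 / ((1+t^2)/2) := by positivity
  have h3 : (0:ℝ) < (1 / ((1+t^2)/2)) ^ (ν/2 + 1/2) := Real.rpow_pos_of_pos hb _
  have h4 : (0:ℝ) < (1/2:ℝ) ^ (ν/2) := Real.rpow_pos_of_pos (by norm_num) _
  positivity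

lemma gk_continuous {ν : ℝ} : Continuous (gk ν) := by
  unfold gk
  refine continuous_const.mul (Continuous.mul ?_ continuous_const)
  have hb : Continuous fun t : ℝ => 1 / ((1+t^2)/2) :=
    continuous_const.div (by continuity) (fun t => ne_of_gt (by positivity))
  exact hb.rpow_const (fun t => Or.inl (ne_of_gt (by positivity)))

lemma uf_le_one {ν : ℝ} (hν : 0 < ν) (c : ℝ) : uf ν c ≤ 1 := by
  have := chiSq_isProb hν
  calc uf ν c ≤ ∫⁻ _x, 1 ∂(chiSq ν) := lintegral_mono (fun x => prob_le_one)
    _ = 1 := by rw [lintegral_one, measure_univ]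

lemma gk_eq_of_uf_eq {ν₁ ν₂ : ℝ} (h1 : 0 < ν₁) (h2 : 0 < ν₂)
    (h : ∀ c, 0 < c → uf ν₁ c = uf ν₂ c) {t : ℝ} (ht : 0 < t) : gk ν₁ t = gk ν₂ t := by
  set c := t/2 with hc
  have hc0 : 0 < c := by rw [hc]; linarith
  have hct : c < t := by rw [hc]; linarith
  have key : ∀ d, c < d → ∫ s in c..d, gk ν₁ s = ∫ s in c..d, gk ν₂ s := by
    intro d hd
    have hIoi : Ioi c = Ioc c d ∪ Ioi d := (Ioc_union_Ioi_eq_Ioi hd.le).symm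
    have hdisj : Disjoint (Ioc c d) (Ioi d) := Ioc_disjoint_Ioi le_rfl
    have e1 := h c hc0
    rw [uf_eq h1, uf_eq h2] at e1
    have e2 := h d (lt_trans hc0 hd)
    rw [uf_eq h1, uf_eq h2] at e2
    have hsplit : ∀ ν, (∫⁻ s in Ioi c, ENNReal.ofReal (gk ν s))
        = (∫⁻ s in Ioc c d, ENNReal.ofReal (gk ν s))
          + ∫⁻ s in Ioi d, ENNReal.ofReal (gk ν s) := by
      intro ν
      rw [hIoi, lintegral_union measurableSet_Ioi hdisj]
    rw [hsplit ν₁, hsplit ν₂, ← e2] at e1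
    have hfin : (∫⁻ s in Ioi d, ENNReal.ofReal (gk ν₁ s)) ≠ ⊤ := by
      rw [← uf_eq h1]
      exact (lt_of_le_of_lt (uf_le_one h1 d) ENNReal.one_lt_top).ne
    have hIoc := (ENNReal.add_left_inj hfin).mp e1
    have conv : ∀ ν, 0 < ν → (∫⁻ s in Ioc c d, ENNReal.ofReal (gk ν s))
        = ENNReal.ofReal (∫ s in Ioc c d, gk ν s) := by
      intro ν hν
      rw [← ofReal_integral_eq_lintegral_ofReal]
      · exact (gk_continuous.integrableOn_Icc).mono_set Ioc_subset_Icc_self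
      · exact ae_of_all _ (fun s => (gk_pos hν s).le)
    rw [conv ν₁ h1, conv ν₂ h2] at hIoc
    have hIocR : ∫ s in Ioc c d, gk ν₁ s = ∫ s in Ioc c d, gk ν₂ s := by
      have n1 : 0 ≤ ∫ s in Ioc c d, gk ν₁ s :=
        integral_nonneg (fun s => (gk_pos h1 s).le)
      have n2 : 0 ≤ ∫ s in Ioc c d, gk ν₂ s :=
        integral_nonneg (fun s => (gk_pos h2 s).le)
      exact (ENNReal.ofReal_eq_ofReal_iff n1 n2).mp hIoc
    rw [intervalIntegral.integral_of_le hd.le, intervalIntegral.integral_of_le hd.le]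
    exact hIocR
  have hd1 : HasDerivAt (fun d => ∫ s in c..d, gk ν₁ s) (gk ν₁ t) t :=
    intervalIntegral.integral_hasDerivAt_right (gk_continuous.intervalIntegrable c t)
      (gk_continuous.stronglyMeasurableAtFilter _ _) gk_continuous.continuousAt
  have hd2 : HasDerivAt (fun d => ∫ s in c..d, gk ν₂ s) (gk ν₂ t) t :=
    intervalIntegral.integral_hasDerivAt_right (gk_continuous.intervalIntegrable c t)
      (gk_continuous.stronglyMeasurableAtFilter _ _) gk_continuous.continuousAt
  have heq : (fun d => ∫ s in c..d, gk ν₁ s) =ᶠ[nhds t] (fun d => ∫ s in c..d, gk ν₂ s) :=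
    eventually_of_mem (Ioi_mem_nhds hct) (fun d hd => key d hd)
  exact hd1.unique (hd2.congr_of_eventuallyEq heq)

lemma uf_inj {ν₁ ν₂ : ℝ} (h1 : 0 < ν₁) (h2 : 0 < ν₂)
    (h : ∀ c, 0 < c → uf ν₁ c = uf ν₂ c) : ν₁ = ν₂ := by
  have e1 : gk ν₁ 1 = gk ν₂ 1 := gk_eq_of_uf_eq h1 h2 h one_pos
  have e3 : gk ν₁ (Real.sqrt 3) = gk ν₂ (Real.sqrt 3) :=
    gk_eq_of_uf_eq h1 h2 h (Real.sqrt_pos.mpr (by norm_num))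
  set B : ℝ → ℝ := fun ν =>
    (1/2:ℝ) ^ (ν/2) / Real.Gamma (ν/2) * (Real.sqrt (2*π))⁻¹ * Real.Gamma (ν/2 + 1/2) with hB
  have hBpos : ∀ ν, 0 < ν → 0 < B ν := by
    intro ν hν
    rw [hB]
    have g1 := Real.Gamma_pos_of_pos (show 0 < ν/2 by linarith)
    have g2 := Real.Gamma_pos_of_pos (show 0 < ν/2 + 1/2 by linarith)
    have h4 : (0:ℝ) < (1/2:ℝ) ^ (ν/2) := Real.rpow_pos_of_pos (by norm_num) _
    positivity
  have hgk1 : ∀ ν, gk ν 1 = B ν := by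
    intro ν
    rw [gk, hB]
    norm_num
  have hgk3 : ∀ ν, gk ν (Real.sqrt 3) = B ν * (1/2:ℝ) ^ (ν/2 + 1/2) := by
    intro ν
    rw [gk, hB]
    rw [show (1 + Real.sqrt 3 ^ 2) = 4 from by
      rw [Real.sq_sqrt (by norm_num : (3:ℝ) ≥ 0)]; norm_num]
    norm_num
    ring
  rw [hgk1, hgk1] at e1
  rw [hgk3, hgk3, e1] at e3
  have hrw : (1/2:ℝ) ^ (ν₁/2 + 1/2) = (1/2:ℝ) ^ (ν₂/2 + 1/2) :=
    mul_left_cancel₀ (hBpos ν₂ h2).ne' e3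
  have hlog := congrArg Real.log hrw
  rw [Real.log_rpow (by norm_num), Real.log_rpow (by norm_num)] at hlog
  have hl2 : Real.log (1/2:ℝ) ≠ 0 := by
    simp only [one_div, Real.log_inv]
    intro hcon
    have := Real.log_eq_zero.mp ((neg_eq_zero).mp hcon)
    norm_num at this
  have : ν₁/2 + 1/2 = ν₂/2 + 1/2 := mul_right_cancel₀ hl2 hlog
  linarith

/-! ### The forward CDF-equality argument -/

lemma Iic_eq_of_H {ρ ν₁ ν₂ m₁ m₂ : ℝ} (hρ : ρ ^ 2 < 1)
    (hν₁ : 0 < ν₁) (hν₂ : 0 < ν₂) (hm₁ : 0 < m₁) (hm₂ : 0 < m₂)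
    (H : ∀ α ∈ Ioo (0:ℝ) 1,
      law ρ m₁ m₂ (Ioi (mQuantile (law ρ ν₁ ν₂) α)) = ENNReal.ofReal (1 - α))
    (t : ℝ) : law ρ ν₁ ν₂ (Iic t) = law ρ m₁ m₂ (Iic t) := by
  have pν := law_isProb (ρ := ρ) hν₁ hν₂
  have pm := law_isProb (ρ := ρ) hm₁ hm₂
  have K1 : ∀ α ∈ Ioo (0:ℝ) 1,
      (law ρ m₁ m₂ (Iic (mQuantile (law ρ ν₁ ν₂) α))).toReal = α := by
    intro α hα
    set q := mQuantile (law ρ ν₁ ν₂) α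
    have hH := H α hα
    have hcompl : law ρ m₁ m₂ (Ioi q) = 1 - law ρ m₁ m₂ (Iic q) := by
      rw [← compl_Iic]
      exact prob_compl_eq_one_sub measurableSet_Iic
    have hle : law ρ m₁ m₂ (Iic q) ≤ 1 := prob_le_one
    have hIic : law ρ m₁ m₂ (Iic q) = ENNReal.ofReal α := by
      have h1 : (1:ℝ≥0∞) - (1 - law ρ m₁ m₂ (Iic q)) = law ρ m₁ m₂ (Iic q) :=
        ENNReal.sub_sub_cancel ENNReal.one_ne_top hle
      rw [← h1, ← hcompl, hH]
      rw [← ENNReal.ofReal_one, ← ENNReal.ofReal_sub _ (by linarith [hα.2] : (0:ℝ) ≤ 1 - α)]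
      norm_num
    rw [hIic, ENNReal.toReal_ofReal hα.1.le]
  have hmonoM : ∀ s t' : ℝ, s ≤ t' →
      (law ρ m₁ m₂ (Iic s)).toReal ≤ (law ρ m₁ m₂ (Iic t')).toReal :=
    fun s t' h => ENNReal.toReal_mono (measure_ne_top _ _)
      (measure_mono (Iic_subset_Iic.mpr h))
  have step1 : ∀ α ∈ Ioo (0:ℝ) 1,
      α ≤ (law ρ ν₁ ν₂ (Iic t)).toReal → α ≤ (law ρ m₁ m₂ (Iic t)).toReal := by
    intro α hα h
    have hq : mQuantile (law ρ ν₁ ν₂) α ≤ t := (quantile_le_iff hα).mpr h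
    calc α = (law ρ m₁ m₂ (Iic (mQuantile (law ρ ν₁ ν₂) α))).toReal := (K1 α hα).symm
      _ ≤ _ := hmonoM _ _ hq
  have step2 : ∀ α ∈ Ioo (0:ℝ) 1,
      α ≤ (law ρ m₁ m₂ (Iic t)).toReal → α ≤ (law ρ ν₁ ν₂ (Iic t)).toReal := by
    intro α hα h
    refine (quantile_le_iff hα).mp ?_
    by_contra hcon
    push_neg at hcon
    set q := mQuantile (law ρ ν₁ ν₂) α
    have hstrict : (law ρ m₁ m₂ (Iic t)).toReal < (law ρ m₁ m₂ (Iic q)).toReal := by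
      have hsplit : law ρ m₁ m₂ (Iic q) = law ρ m₁ m₂ (Iic t) + law ρ m₁ m₂ (Ioc t q) := by
        rw [← measure_union (Iic_disjoint_Ioc le_rfl) measurableSet_Ioc, Iic_union_Ioc_eq_Iic
          hcon.le]
      refine ENNReal.toReal_strict_mono (measure_ne_top _ _) ?_
      rw [hsplit]
      exact ENNReal.lt_add_right (measure_ne_top _ _) (law_Ioc_pos hρ hm₁ hm₂ hcon).ne'
    rw [K1 α hα] at hstrict
    linarith
  have hFm0 : 0 < (law ρ m₁ m₂ (Iic t)).toReal :=
    ENNReal.toReal_pos (law_Iic_pos hρ hm₁ hm₂ t).ne' (measure_ne_top _ _)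
  have hFm1 : (law ρ m₁ m₂ (Iic t)).toReal < 1 := by
    have hlt : law ρ m₁ m₂ (Iic t) < 1 := by
      have hcompl : law ρ m₁ m₂ (Ioi t) = 1 - law ρ m₁ m₂ (Iic t) := by
        rw [← compl_Iic]
        exact prob_compl_eq_one_sub measurableSet_Iic
      have hpos := law_Ioi_pos hρ hm₁ hm₂ t
      rw [hcompl] at hpos
      by_contra hcon
      push_neg at hcon
      have : law ρ m₁ m₂ (Iic t) = 1 := le_antisymm prob_le_one hcon
      rw [this] at hpos
      simp at hpos
    calc (law ρ m₁ m₂ (Iic t)).toReal < (1:ℝ≥0∞).toReal :=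
          ENNReal.toReal_strict_mono ENNReal.one_ne_top hlt
      _ = 1 := by simp
  have hFν1 : (law ρ ν₁ ν₂ (Iic t)).toReal ≤ 1 := by
    calc (law ρ ν₁ ν₂ (Iic t)).toReal ≤ (1:ℝ≥0∞).toReal :=
          ENNReal.toReal_mono ENNReal.one_ne_top prob_le_one
      _ = 1 := by simp
  have hFν0 : 0 < (law ρ ν₁ ν₂ (Iic t)).toReal :=
    ENNReal.toReal_pos (law_Iic_pos hρ hν₁ hν₂ t).ne' (measure_ne_top _ _)
  have hreal : (law ρ ν₁ ν₂ (Iic t)).toReal = (law ρ m₁ m₂ (Iic t)).toReal := by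
    refine le_antisymm ?_ ?_
    · by_contra hcon
      push_neg at hcon
      obtain ⟨α, hα1, hα2⟩ := exists_between hcon
      have hαIoo : α ∈ Ioo (0:ℝ) 1 := ⟨lt_trans hFm0 hα1, lt_of_lt_of_le hα2 hFν1⟩
      exact absurd (step1 α hαIoo hα2.le) (not_le.mpr hα1)
    · by_contra hcon
      push_neg at hcon
      obtain ⟨α, hα1, hα2⟩ := exists_between hcon
      have hαIoo : α ∈ Ioo (0:ℝ) 1 := ⟨lt_trans hFν0 hα1, lt_trans hα2 hFm1⟩
      exact absurd (step2 α hαIoo hα2.le) (not_le.mpr hα1)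
  exact (ENNReal.toReal_eq_toReal_iff' (measure_ne_top _ _) (measure_ne_top _ _)).mp hreal

end S10

open S10 Set

/-- Theorem 2(c): `P((√(1-ρ²)Z + ρ√X₁)/√X₂ > q_α(ρ)) = 1 - α`, where `q_α(ρ)` is the
α-quantile of `(√(1-ρ²)Z* + ρ√Xₐ*)/√X_b*`, holds for every `α ∈ (0,1)` and every
`ρ ∈ (-1,1)` if and only if `(a, b) = (1, 2)`. -/
theorem stmt10 (n : ℕ) (hn : 3 ≤ n) (a b : ℝ) (ha : 0 < (n : ℝ) - a) (hb : 0 < (n : ℝ) - b) :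
    (∀ α ∈ Set.Ioo (0 : ℝ) 1, ∀ ρ ∈ Set.Ioo (-1 : ℝ) 1,
      ((gaussianReal 0 1).prod ((chiSq ((n : ℝ) - 1)).prod (chiSq ((n : ℝ) - 2))))
          {p : ℝ × ℝ × ℝ |
            mQuantile
              (Measure.map
                (fun q : ℝ × ℝ × ℝ =>
                  (Real.sqrt (1 - ρ ^ 2) * q.1 + ρ * Real.sqrt q.2.1) / Real.sqrt q.2.2)
                ((gaussianReal 0 1).prod ((chiSq ((n : ℝ) - a)).prod (chiSq ((n : ℝ) - b)))))
              α
            < (Real.sqrt (1 - ρ ^ 2) * p.1 + ρ * Real.sqrt p.2.1) / Real.sqrt p.2.2}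
        = ENNReal.ofReal (1 - α))
    ↔ (a = 1 ∧ b = 2) := by
  have hn3 : (3:ℝ) ≤ (n:ℝ) := by exact_mod_cast hn
  have h1 : 0 < (n:ℝ) - 1 := by linarith
  have h2 : 0 < (n:ℝ) - 2 := by linarith
  constructor
  · intro H
    -- rewrite the hypothesis in terms of `law`
    have H' : ∀ ρ : ℝ, ρ ^ 2 < 1 → ∀ α ∈ Ioo (0:ℝ) 1,
        law ρ ((n:ℝ)-1) ((n:ℝ)-2)
          (Ioi (mQuantile (law ρ ((n:ℝ)-a) ((n:ℝ)-b)) α)) = ENNReal.ofReal (1 - α) := by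
      intro ρ hρ α hα
      have hρmem : ρ ∈ Ioo (-1:ℝ) 1 := ⟨by nlinarith, by nlinarith⟩
      have hHαρ := H α hα ρ hρmem
      set q := mQuantile (law ρ ((n:ℝ)-a) ((n:ℝ)-b)) α with hq
      have hset : {p : ℝ × ℝ × ℝ | q < gmap ρ p} = gmap ρ ⁻¹' (Ioi q) := rfl
      calc law ρ ((n:ℝ)-1) ((n:ℝ)-2) (Ioi q)
          = jm ((n:ℝ)-1) ((n:ℝ)-2) (gmap ρ ⁻¹' (Ioi q)) :=
            Measure.map_apply (measurable_gmap ρ) measurableSet_Ioi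
        _ = jm ((n:ℝ)-1) ((n:ℝ)-2) {p : ℝ × ℝ × ℝ | q < gmap ρ p} := by rw [hset]
        _ = ENNReal.ofReal (1 - α) := hHαρ
    have hb2 : b = 2 := by
      have huf : ∀ c : ℝ, 0 < c → uf ((n:ℝ)-b) c = uf ((n:ℝ)-2) c := by
        intro c hc
        have h0 : (0:ℝ) ^ 2 < 1 := by norm_num
        have hIic := Iic_eq_of_H h0 ha hb h1 h2 (H' 0 h0) (-c)
        rw [law_Iic_neg_eq ha hb c, law_Iic_neg_eq h1 h2 c] at hIic
        exact hIic
      have := uf_inj (by linarith : 0 < (n:ℝ)-b) h2 huf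
      linarith
    have ha1 : a = 1 := by
      have huf : ∀ c : ℝ, 0 < c → uf ((n:ℝ)-a) c = uf ((n:ℝ)-1) c := by
        intro c hc
        have hd : 0 < Real.sqrt (1 + c^2) := Real.sqrt_pos.mpr (by positivity)
        have hd2 : Real.sqrt (1 + c^2) ^ 2 = 1 + c^2 := Real.sq_sqrt (by positivity)
        set ρ := c / Real.sqrt (1 + c^2) with hρdef
        have hρ2 : ρ ^ 2 < 1 := by
          rw [hρdef, div_pow, hd2]
          rw [div_lt_one (by positivity)]
          linarith
        have h1ρ : 1 - ρ^2 = 1 / (1 + c^2) := by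
          rw [hρdef, div_pow, hd2]
          field_simp
          ring
        have hsq : Real.sqrt (1 - ρ^2) = 1 / Real.sqrt (1 + c^2) := by
          rw [h1ρ, one_div, one_div, ← Real.sqrt_inv]
        have hc' : ρ / Real.sqrt (1 - ρ^2) = c := by
          rw [hsq, hρdef]
          field_simp
        have hIic := Iic_eq_of_H hρ2 ha hb h1 h2 (H' ρ hρ2) 0
        rw [law_Iic_zero_eq hρ2 ha hb, law_Iic_zero_eq hρ2 h1 h2, hc'] at hIic
        exact hIic
      have := uf_inj (by linarith : 0 < (n:ℝ)-a) h1 huf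
      linarith
    exact ⟨ha1, hb2⟩
  · rintro ⟨ha1, hb2⟩
    subst ha1
    subst hb2
    intro α hα ρ hρmem
    have hρ2 : ρ ^ 2 < 1 := by
      obtain ⟨hρ1, hρ2⟩ := hρmem
      nlinarith
    have hprob := law_isProb (ρ := ρ) h1 h2
    set q := mQuantile (law ρ ((n:ℝ)-1) ((n:ℝ)-2)) α with hq
    have hset : {p : ℝ × ℝ × ℝ | q < gmap ρ p} = gmap ρ ⁻¹' (Ioi q) := rfl
    have hmap : jm ((n:ℝ)-1) ((n:ℝ)-2) {p : ℝ × ℝ × ℝ | q < gmap ρ p}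
        = law ρ ((n:ℝ)-1) ((n:ℝ)-2) (Ioi q) := by
      rw [hset]
      exact (Measure.map_apply (measurable_gmap ρ) measurableSet_Ioi).symm
    have hatom := law_atomless hρ2 h1 h2 q
    have hcdf : (law ρ ((n:ℝ)-1) ((n:ℝ)-2) (Iic q)).toReal = α := cdf_quantile_eq hα hatom
    have hIic : law ρ ((n:ℝ)-1) ((n:ℝ)-2) (Iic q) = ENNReal.ofReal α := by
      rw [← hcdf, ENNReal.ofReal_toReal (measure_ne_top _ _)]
    calc jm ((n:ℝ)-1) ((n:ℝ)-2) {p : ℝ × ℝ × ℝ | q < gmap ρ p}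
        = law ρ ((n:ℝ)-1) ((n:ℝ)-2) (Ioi q) := hmap
      _ = 1 - law ρ ((n:ℝ)-1) ((n:ℝ)-2) (Iic q) := by
          rw [← compl_Iic]
          exact prob_compl_eq_one_sub measurableSet_Iic
      _ = ENNReal.ofReal (1 - α) := by
          rw [hIic, ← ENNReal.ofReal_one,
            ← ENNReal.ofReal_sub _ hα.1.le]
end
end
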